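/- arXiv:1708.05476 — 9 statements merged into one kernel-verified Lean document; each statement's English description precedes it below -/
import Mathlib

section
/- For all real numbers α, β ≥ 0 and p ∈ (1,2], one has (p-1)(α-β)² ≤ γ_p(α,β) + γ_p(β,α) ≤ p(α-β)², where γ_p(α,β) := pα(α-β) - α^(2-p)(α^p - β^p). -/
/-!
Writing `S = α^(2-p) β^p + α^p β^(2-p)`, the symmetrized sum equals
`p (α-β)² - (α² + β² - S)`. Weighted AM-GM bounds each summand of `S` by a convex combination of
`α²` and `β²`, so `S ≤ α² + β²`; and the two summands of `S` multiply to `(αβ)²`, so plain AM-GM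
gives `2αβ ≤ S`, i.e. `α² + β² - S ≤ (α-β)²`.
-/

/-- `γ_p(α,β) = pα(α-β) - α^(2-p)(α^p - β^p)`, with real powers (`0^t = 0` for `t > 0`). -/
noncomputable def gammaP (p α β : ℝ) : ℝ :=
  p * α * (α - β) - α ^ (2 - p) * (α ^ p - β ^ p)

lemma two_mul_le_add_of_mul_eq_sq {x y c : ℝ} (hx : 0 ≤ x) (hy : 0 ≤ y) (h : x * y = c ^ 2) :
    2 * c ≤ x + y := by
  nlinarith [sq_nonneg (x - y), sq_nonneg (x + y - 2 * c)]

namespace Real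

variable {a b s t : ℝ}

lemma rpow_mul_rpow_eq_sq_of_add_eq_two (ha : 0 ≤ a) (hst : s + t = 2) :
    a ^ s * a ^ t = a ^ 2 := by
  rw [← rpow_add' ha (by rw [hst]; norm_num), hst, rpow_two]

lemma rpow_mul_rpow_le_of_add_eq_two (ha : 0 ≤ a) (hb : 0 ≤ b) (hs : 0 ≤ s) (ht : 0 ≤ t)
    (hst : s + t = 2) : a ^ s * b ^ t ≤ s / 2 * a ^ 2 + t / 2 * b ^ 2 := by
  have h := geom_mean_le_arith_mean2_weighted (by linarith : 0 ≤ s / 2) (by linarith : 0 ≤ t / 2)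
    (sq_nonneg a) (sq_nonneg b) (by linarith)
  have sq_rpow_half : ∀ {x : ℝ}, 0 ≤ x → ∀ w : ℝ, (x ^ 2) ^ (w / 2) = x ^ w := fun hx w => by
    rw [← rpow_two, ← rpow_mul hx, mul_div_cancel₀ _ two_ne_zero]
  rwa [sq_rpow_half ha, sq_rpow_half hb] at h

lemma rpow_mul_rpow_add_swap_le (ha : 0 ≤ a) (hb : 0 ≤ b) (hs : 0 ≤ s) (ht : 0 ≤ t)
    (hst : s + t = 2) : a ^ s * b ^ t + a ^ t * b ^ s ≤ a ^ 2 + b ^ 2 := by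
  have h₁ := rpow_mul_rpow_le_of_add_eq_two ha hb hs ht hst
  have h₂ := rpow_mul_rpow_le_of_add_eq_two ha hb ht hs (by linarith)
  linear_combination h₁ + h₂ + (a ^ 2 + b ^ 2) / 2 * hst

lemma two_mul_le_rpow_mul_rpow_add_swap (ha : 0 ≤ a) (hb : 0 ≤ b) (hst : s + t = 2) :
    2 * (a * b) ≤ a ^ s * b ^ t + a ^ t * b ^ s := by
  refine two_mul_le_add_of_mul_eq_sq (by positivity) (by positivity) ?_
  calc a ^ s * b ^ t * (a ^ t * b ^ s) = (a ^ s * a ^ t) * (b ^ t * b ^ s) := by ring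
    _ = (a * b) ^ 2 := by
      rw [rpow_mul_rpow_eq_sq_of_add_eq_two ha hst,
        rpow_mul_rpow_eq_sq_of_add_eq_two hb (by linarith), mul_pow]

end Real

lemma gammaP_add_gammaP_swap (p : ℝ) {α β : ℝ} (hα : 0 ≤ α) (hβ : 0 ≤ β) :
    gammaP p α β + gammaP p β α =
      p * (α - β) ^ 2 - (α ^ 2 + β ^ 2 - (α ^ (2 - p) * β ^ p + α ^ p * β ^ (2 - p))) := by
  have hα' := Real.rpow_mul_rpow_eq_sq_of_add_eq_two hα (sub_add_cancel 2 p)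
  have hβ' := Real.rpow_mul_rpow_eq_sq_of_add_eq_two hβ (sub_add_cancel 2 p)
  unfold gammaP
  linear_combination -hα' - hβ'

theorem symmetrized_gammaP_equiv_square (p α β : ℝ) (hα : 0 ≤ α) (hβ : 0 ≤ β)
    (hp1 : 1 < p) (hp2 : p ≤ 2) :
    (p - 1) * (α - β) ^ 2 ≤ gammaP p α β + gammaP p β α ∧
      gammaP p α β + gammaP p β α ≤ p * (α - β) ^ 2 := by
  have hst : (2 - p) + p = 2 := sub_add_cancel 2 p
  have upper := Real.rpow_mul_rpow_add_swap_le hα hβ (by linarith) (by linarith) hst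
  have lower := Real.two_mul_le_rpow_mul_rpow_add_swap hα hβ hst
  rw [gammaP_add_gammaP_swap p hα hβ]
  constructor <;> linarith
end

section
/- For all real numbers α, β ≥ 0 and p ∈ (1,2], one has (α^{2-p} - β^{2-p})(α^p - β^p) ≤ (α - β)². -/
theorem rpow_diff_mul_rpow_diff_le_sq (p α β : ℝ) (hα : 0 ≤ α) (hβ : 0 ≤ β)
    (hp1 : 1 < p) (hp2 : p ≤ 2) :
    (α ^ (2 - p) - β ^ (2 - p)) * (α ^ p - β ^ p) ≤ (α - β) ^ 2 := by
  have hq : 0 ≤ 2 - p := by linarith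
  have hp : 0 ≤ p := by linarith
  set a := α ^ ((2 - p) / 2) * β ^ (p / 2) with ha
  set b := α ^ (p / 2) * β ^ ((2 - p) / 2) with hb
  have ha2 : a ^ 2 = α ^ (2 - p) * β ^ p := by
    rw [ha, mul_pow, ← Real.rpow_natCast (α ^ ((2 - p) / 2)) 2,
      ← Real.rpow_natCast (β ^ (p / 2)) 2, ← Real.rpow_mul hα, ← Real.rpow_mul hβ]
    norm_num
  have hb2 : b ^ 2 = α ^ p * β ^ (2 - p) := by
    rw [hb, mul_pow, ← Real.rpow_natCast (α ^ (p / 2)) 2,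
      ← Real.rpow_natCast (β ^ ((2 - p) / 2)) 2, ← Real.rpow_mul hα, ← Real.rpow_mul hβ]
    norm_num
  have hab : a * b = α * β := by
    rw [ha, hb]
    have h1 : α ^ ((2 - p) / 2) * α ^ (p / 2) = α := by
      rw [← Real.rpow_add_of_nonneg hα (by linarith) (by linarith),
        show (2 - p) / 2 + p / 2 = 1 by ring, Real.rpow_one]
    have h2 : β ^ (p / 2) * β ^ ((2 - p) / 2) = β := by
      rw [← Real.rpow_add_of_nonneg hβ (by linarith) (by linarith),
        show p / 2 + (2 - p) / 2 = 1 by ring, Real.rpow_one]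
    calc α ^ ((2 - p) / 2) * β ^ (p / 2) * (α ^ (p / 2) * β ^ ((2 - p) / 2))
        = (α ^ ((2 - p) / 2) * α ^ (p / 2)) * (β ^ (p / 2) * β ^ ((2 - p) / 2)) := by ring
      _ = α * β := by rw [h1, h2]
  have key : 2 * (α * β) ≤ α ^ (2 - p) * β ^ p + α ^ p * β ^ (2 - p) := by
    rw [← ha2, ← hb2, ← hab]
    nlinarith [sq_nonneg (a - b)]
  have hαα : α ^ (2 - p) * α ^ p = α ^ 2 := by
    rw [← Real.rpow_add_of_nonneg hα hq hp, ← Real.rpow_natCast α 2]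
    norm_num
  have hββ : β ^ (2 - p) * β ^ p = β ^ 2 := by
    rw [← Real.rpow_add_of_nonneg hβ hq hp, ← Real.rpow_natCast β 2]
    norm_num
  nlinarith [key, hαα, hββ]
end

section
/- For all real numbers α, β ≥ 0 and p ∈ (1,2], the quantity γ_p(α,β) := pα(α-β) - α^{2-p}(α^p - β^p) is nonnegative. -/
/-! The tangent line of the convex function `x ↦ x ^ p` at `α` lies below its graph; multiplying
that inequality at `β` by `α ^ (2 - p)` gives exactly `γ_p(α, β) ≥ 0`. At `α = 0`, `γ_p(0, β)`
reduces to `0 ^ (2 - p) * β ^ p`. -/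

open Real

theorem Real.rpow_add_mul_rpow_sub_one_mul_sub_le_rpow {p a b : ℝ} (hp : 1 ≤ p) (ha : 0 < a)
    (hb : 0 ≤ b) : a ^ p + p * a ^ (p - 1) * (b - a) ≤ b ^ p := by
  have bernoulli : 1 + p * (b / a - 1) ≤ (b / a) ^ p := by
    simpa using
      one_add_mul_self_le_rpow_one_add (s := b / a - 1) (by linarith [div_nonneg hb ha.le]) hp
  rw [div_rpow hb ha.le, le_div_iff₀ (rpow_pos_of_pos ha p)] at bernoulli
  calc a ^ p + p * a ^ (p - 1) * (b - a) = (1 + p * (b / a - 1)) * a ^ p := by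
        rw [rpow_sub_one ha.ne']; field_simp
    _ ≤ b ^ p := bernoulli

theorem gammaP_nonneg_general (p α β : ℝ) (hα : 0 ≤ α) (hβ : 0 ≤ β)
    (hp1 : 1 < p) :
    0 ≤ gammaP p α β := by
  unfold gammaP
  rcases hα.eq_or_lt with rfl | hα
  · rw [zero_rpow (by linarith : p ≠ 0)]
    simpa using mul_nonneg (rpow_nonneg le_rfl (2 - p)) (rpow_nonneg hβ p)
  have tangent := mul_le_mul_of_nonneg_left
    (rpow_add_mul_rpow_sub_one_mul_sub_le_rpow hp1.le hα hβ) (rpow_nonneg hα.le (2 - p))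
  have rpow_mul_rpow : α ^ (2 - p) * α ^ (p - 1) = α := by rw [← rpow_add hα]; norm_num
  linear_combination tangent + p * (α - β) * rpow_mul_rpow

theorem gammaP_nonneg (p α β : ℝ) (hα : 0 ≤ α) (hβ : 0 ≤ β)
    (hp1 : 1 < p) (hp2 : p ≤ 2) :
    0 ≤ gammaP p α β :=
  gammaP_nonneg_general p α β hα hβ hp1
end

section
/- Let G = (V,E,ν,μ) be a locally finite weighted graph with M := sup_x deg_x/ν_x < ∞. Then for any p ∈ [1,∞) and any finitely supported f : V → ℝ, ‖Δf‖_{ℓ^p(V,ν)}^p ≤ 2 M^{p-1} ‖|Df|‖_{ℓ^p(E,μ)}^p, where Δf(x) = (1/ν_x) Σ_y μ_{xy}(f(x)-f(y)). -/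
/-!
At each vertex, Hölder's inequality with weights `μ x y` bounds `|Σ_y μ_xy (f x - f y)|^p` by
`deg_x^(p-1) Σ_y μ_xy |f x - f y|^p`; dividing by `ν_x^(p-1)` turns `deg_x^(p-1)` into
`(deg_x/ν_x)^(p-1) ≤ M^(p-1)`. Summing over `x` gives the claim; all sums are finite since, by
symmetry of `μ`, the edge energy at `x` vanishes unless `x` is in the support of `f` or adjacent
to it.
-/

open Finset Function Real

section WeightedPowerMean

variable {ι : Type*} {w : ι → ℝ} {p : ℝ}

theorem Real.abs_sum_mul_rpow_le (s : Finset ι) (hw : ∀ i, 0 ≤ w i) (a : ι → ℝ) (hp : 1 ≤ p) :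
    |∑ i ∈ s, w i * a i| ^ p ≤ (∑ i ∈ s, w i) ^ (p - 1) * ∑ i ∈ s, w i * |a i| ^ p := by
  have hp0 : 0 < p := zero_lt_one.trans_le hp
  have hW : 0 ≤ ∑ i ∈ s, w i := sum_nonneg fun i _ => hw i
  have hQ : 0 ≤ ∑ i ∈ s, w i * |a i| ^ p := sum_nonneg fun i _ => by have := hw i; positivity
  have triangle : |∑ i ∈ s, w i * a i| ≤ ∑ i ∈ s, w i * |a i| :=
    (abs_sum_le_sum_abs _ _).trans_eq
      (sum_congr rfl fun i _ => by rw [abs_mul, abs_of_nonneg (hw i)])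
  have holder := inner_le_weight_mul_Lp_of_nonneg s hp w (fun i => |a i|) hw fun i => abs_nonneg _
  calc |∑ i ∈ s, w i * a i| ^ p
      ≤ ((∑ i ∈ s, w i) ^ (1 - p⁻¹) * (∑ i ∈ s, w i * |a i| ^ p) ^ p⁻¹) ^ p := by
        gcongr
        exact triangle.trans holder
    _ = (∑ i ∈ s, w i) ^ (p - 1) * ∑ i ∈ s, w i * |a i| ^ p := by
        rw [mul_rpow (by positivity) (by positivity), ← rpow_mul hW, ← rpow_mul hQ,
          inv_mul_cancel₀ hp0.ne', rpow_one, sub_mul, one_mul, inv_mul_cancel₀ hp0.ne']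

theorem Real.abs_tsum_mul_rpow_le (hw : ∀ i, 0 ≤ w i) (hfin : (support w).Finite) (a : ι → ℝ)
    (hp : 1 ≤ p) :
    |∑' i, w i * a i| ^ p ≤ (∑' i, w i) ^ (p - 1) * ∑' i, w i * |a i| ^ p := by
  have hzero : ∀ i ∉ hfin.toFinset, w i = 0 := fun i hi => by simpa using hi
  rw [tsum_eq_sum (s := hfin.toFinset) hzero, tsum_eq_sum (s := hfin.toFinset) fun i hi => by
      simp [hzero i hi], tsum_eq_sum (s := hfin.toFinset) fun i hi => by simp [hzero i hi]]
  exact abs_sum_mul_rpow_le _ hw a hp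

end WeightedPowerMean

theorem abs_div_rpow_mul_self {a ν : ℝ} (hν : 0 < ν) (p : ℝ) :
    |a / ν| ^ p * ν = |a| ^ p / ν ^ (p - 1) := by
  rw [abs_div, abs_of_pos hν, div_rpow (abs_nonneg a) hν.le, rpow_sub_one hν.ne']
  field_simp

section WeightedGraph

variable {V : Type*} {ν : V → ℝ} {μ : V → V → ℝ} {M p : ℝ}

theorem abs_laplacian_rpow_mul_le {x : V} (hνx : 0 < ν x) (hnn : ∀ y, 0 ≤ μ x y)
    (hlocx : (support (μ x)).Finite) (hMx : (∑' y, μ x y) / ν x ≤ M) (hp : 1 ≤ p) (f : V → ℝ) :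
    |(∑' y, μ x y * (f x - f y)) / ν x| ^ p * ν x ≤
      M ^ (p - 1) * ∑' y, μ x y * |f x - f y| ^ p := by
  have hdeg : 0 ≤ (∑' y, μ x y) / ν x := div_nonneg (tsum_nonneg hnn) hνx.le
  have hQ : 0 ≤ ∑' y, μ x y * |f x - f y| ^ p :=
    tsum_nonneg fun y => by have := hnn y; positivity
  calc |(∑' y, μ x y * (f x - f y)) / ν x| ^ p * ν x
      = |∑' y, μ x y * (f x - f y)| ^ p / ν x ^ (p - 1) := abs_div_rpow_mul_self hνx p
    _ ≤ (∑' y, μ x y) ^ (p - 1) * (∑' y, μ x y * |f x - f y| ^ p) / ν x ^ (p - 1) := by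
        gcongr
        exact abs_tsum_mul_rpow_le hnn hlocx _ hp
    _ = ((∑' y, μ x y) / ν x) ^ (p - 1) * ∑' y, μ x y * |f x - f y| ^ p := by
        rw [div_rpow (tsum_nonneg hnn) hνx.le]
        ring
    _ ≤ M ^ (p - 1) * ∑' y, μ x y * |f x - f y| ^ p := by
        gcongr

theorem support_tsum_mul_comp_sub_subset (hsymm : ∀ x y, μ x y = μ y x) {g : ℝ → ℝ}
    (hg : g 0 = 0) (f : V → ℝ) :
    support (fun x => ∑' y, μ x y * g (f x - f y)) ⊆
      support f ∪ ⋃ y ∈ support f, support (μ y) := by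
  intro x hx
  by_contra hxS
  simp only [Set.mem_union, Set.mem_iUnion, mem_support, not_or, not_exists, not_not] at hxS
  obtain ⟨hfx, hμ⟩ := hxS
  refine hx ((tsum_congr fun y => ?_).trans tsum_zero)
  by_cases hfy : f y = 0
  · rw [hfx, hfy, sub_zero, hg, mul_zero]
  · rw [hsymm, hμ y hfy, zero_mul]

end WeightedGraph

theorem laplacian_norm_le_edge_norm_general {V : Type*} (ν : V → ℝ) (μ : V → V → ℝ) (M : ℝ)
    (hν : ∀ x, 0 < ν x) (hsymm : ∀ x y, μ x y = μ y x) (hnn : ∀ x y, 0 ≤ μ x y)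
    (hloc : ∀ x, (Function.support (μ x)).Finite)
    (hM : ∀ x, (∑' y, μ x y) / ν x ≤ M)
    (p : ℝ) (hp : 1 ≤ p)
    (f : V → ℝ) (hf : (Function.support f).Finite) :
    (∑' x, |(∑' y, μ x y * (f x - f y)) / ν x| ^ p * ν x)
      ≤ 2 * M ^ (p - 1) * ((1 / 2) * ∑' x, ∑' y, μ x y * |f x - f y| ^ p) := by
  have hpointwise x := abs_laplacian_rpow_mul_le (hν x) (hnn x) (hloc x) (hM x) hp f
  have henergy : Summable fun x => ∑' y, μ x y * |f x - f y| ^ p := by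
    refine summable_of_hasFiniteSupport <|
      (hf.union (hf.biUnion fun y _ => hloc y)).subset ?_
    exact support_tsum_mul_comp_sub_subset hsymm (g := fun t => |t| ^ p)
      (by simp [(zero_lt_one.trans_le hp).ne']) f
  have hlaplacian : Summable fun x => |(∑' y, μ x y * (f x - f y)) / ν x| ^ p * ν x :=
    .of_nonneg_of_le (fun x => by have := hν x; positivity) hpointwise (henergy.mul_left _)
  calc (∑' x, |(∑' y, μ x y * (f x - f y)) / ν x| ^ p * ν x)
      ≤ ∑' x, M ^ (p - 1) * ∑' y, μ x y * |f x - f y| ^ p :=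
        hlaplacian.tsum_le_tsum hpointwise (henergy.mul_left _)
    _ = 2 * M ^ (p - 1) * ((1 / 2) * ∑' x, ∑' y, μ x y * |f x - f y| ^ p) := by
        rw [tsum_mul_left]
        ring

theorem laplacian_norm_le_edge_norm {V : Type*} (ν : V → ℝ) (μ : V → V → ℝ) (M : ℝ)
    (hν : ∀ x, 0 < ν x) (hsymm : ∀ x y, μ x y = μ y x) (hnn : ∀ x y, 0 ≤ μ x y)
    (hloc : ∀ x, (Function.support (μ x)).Finite)
    (hM : ∀ x, (∑' y, μ x y) / ν x ≤ M) (hM0 : 0 ≤ M)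
    (p : ℝ) (hp : 1 ≤ p)
    (f : V → ℝ) (hf : (Function.support f).Finite) :
    (∑' x, |(∑' y, μ x y * (f x - f y)) / ν x| ^ p * ν x)
      ≤ 2 * M ^ (p - 1) * ((1 / 2) * ∑' x, ∑' y, μ x y * |f x - f y| ^ p) :=
  laplacian_norm_le_edge_norm_general ν μ M hν hsymm hnn hloc hM p hp f hf
end

section
/- Let (V,E,deg,μ) be a normalized weighted graph (ν = deg). If the multiplicative inequality ‖|∇f|‖²_{ℓ^p(V,deg)} ≤ C_p ‖f‖_{ℓ^p(V,deg)} ‖Δ̃f‖_{ℓ^p(V,deg)} holds for all finitely supported f, then for every vertex x, (deg_x + Σ_{y∼x} μ_{xy}^{p/2} deg_y^{1-p/2})² ≤ C_p' deg_x (deg_x + Σ_{y∼x} μ_{xy}^p deg_y^{1-p}). This follows by testing with the indicator function δ_x. -/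
/-!
Test the inequality with `f = δ_x`. Then `‖δ_x‖_p^p = deg_x`, and for `v ≠ x`
`|∇δ_x|(v)^p deg_v = 2^{-p/2} μ_{xv}^{p/2} deg_v^{1-p/2}` and
`|Δ̃δ_x(v)|^p deg_v = μ_{xv}^p deg_v^{1-p}`. At `v = x` one only needs `|Δ̃δ_x(x)| ≤ 1`, and the
self-loop term `μ_{xx}^{p/2} deg_x^{1-p/2}`, invisible to `∇δ_x`, is at most `deg_x`. Raising the
tested inequality to the power `p` and using `(a + b)² ≤ 2a² + 2b²` gives the claim with
`C' = 8 + 2·2^p·max(C_p, 0)^p`.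
-/

open Function

noncomputable section

namespace WeightedGraph

variable {V : Type*} (μ : V → V → ℝ)

def deg (x : V) : ℝ := ∑' y, μ x y

def laplacian (f : V → ℝ) (x : V) : ℝ := (∑' y, μ x y * (f x - f y)) / deg μ x

def gradNorm (f : V → ℝ) (x : V) : ℝ := √((∑' y, μ x y * (f x - f y) ^ 2) / (2 * deg μ x))

variable {μ}

lemma gradNorm_nonneg (f : V → ℝ) (x : V) : 0 ≤ gradNorm μ f x := Real.sqrt_nonneg _

lemma summable_of_eq_zero_off_neighbours {x : V} (hloc : (support (μ x)).Finite) {g : V → ℝ}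
    (hg : ∀ v ≠ x, μ x v = 0 → g v = 0) : Summable g :=
  summable_of_hasFiniteSupport <| (hloc.insert x).subset fun v hv => by
    by_contra h
    simp only [Set.mem_insert_iff, mem_support, not_or, not_not] at h
    exact hv (hg v h.1 h.2)

lemma le_deg {x : V} (hnn : ∀ y, 0 ≤ μ x y) (hs : Summable (μ x)) (y : V) : μ x y ≤ deg μ x :=
  hs.le_tsum y fun z _ => hnn z

lemma abs_laplacian_le_one {f : V → ℝ} {x : V} (hnn : ∀ y, 0 ≤ μ x y) (hs : Summable (μ x))
    (hdeg : 0 < deg μ x) (hf : ∀ y, |f x - f y| ≤ 1) : |laplacian μ f x| ≤ 1 := by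
  have hbound : ∀ y, |μ x y * (f x - f y)| ≤ μ x y := fun y => by
    rw [abs_mul, abs_of_nonneg (hnn y)]
    exact mul_le_of_le_one_right (hnn y) (hf y)
  have hsum : Summable fun y => μ x y * (f x - f y) := Summable.of_norm_bounded hs hbound
  rw [laplacian, abs_div, abs_of_pos hdeg, div_le_one hdeg, deg]
  refine abs_le.2 ⟨?_, hsum.tsum_le_tsum (fun y => le_of_abs_le (hbound y)) hs⟩
  rw [← tsum_neg]
  exact hs.neg.tsum_le_tsum (fun y => neg_le_of_abs_le (hbound y)) hsum

lemma two_rpow_mul_sqrt_div_rpow_mul {a d q : ℝ} (ha : 0 ≤ a) (hd : 0 < d) :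
    2 ^ (q / 2) * (√(a / (2 * d)) ^ q * d) = a ^ (q / 2) * d ^ (1 - q / 2) := by
  rw [Real.sqrt_eq_rpow, ← Real.rpow_mul (by positivity), Real.div_rpow ha (by positivity),
    Real.mul_rpow (by norm_num) hd.le, Real.rpow_sub hd, Real.rpow_one, one_div_mul_eq_div]
  have h2 : (0 : ℝ) < 2 ^ (q / 2) := by positivity
  have hd' : 0 < d ^ (q / 2) := by positivity
  field_simp

lemma div_rpow_mul_self {a d q : ℝ} (ha : 0 ≤ a) (hd : 0 < d) :
    (a / d) ^ q * d = a ^ q * d ^ (1 - q) := by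
  rw [Real.div_rpow ha hd.le, Real.rpow_sub hd, Real.rpow_one]
  have hd' : 0 < d ^ q := by positivity
  field_simp

lemma rpow_mul_rpow_one_sub_le {a d r : ℝ} (ha : 0 ≤ a) (had : a ≤ d) (hd : 0 < d) (hr : 0 ≤ r) :
    a ^ r * d ^ (1 - r) ≤ d :=
  calc a ^ r * d ^ (1 - r) ≤ d ^ r * d ^ (1 - r) := by gcongr
    _ = d := by rw [← Real.rpow_add hd, add_sub_cancel, Real.rpow_one]

lemma sq_le_rpow_mul_mul_of_rpow_inv_sq_le {G A B c C p : ℝ} (hp : 0 < p) (hG : 0 ≤ G)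
    (hA : 0 ≤ A) (hB : 0 ≤ B) (hcC : c ≤ C) (hC : 0 ≤ C)
    (h : (G ^ (1 / p)) ^ 2 ≤ c * A ^ (1 / p) * B ^ (1 / p)) : G ^ 2 ≤ C ^ p * A * B := by
  rw [← Real.rpow_le_rpow_iff (sq_nonneg G) (by positivity) (one_div_pos.2 hp)]
  calc (G ^ 2) ^ (1 / p) = (G ^ (1 / p)) ^ 2 := (Real.rpow_pow_comm hG _ 2).symm
    _ ≤ c * A ^ (1 / p) * B ^ (1 / p) := h
    _ ≤ C * A ^ (1 / p) * B ^ (1 / p) := by gcongr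
    _ = (C ^ p * A * B) ^ (1 / p) := by
        rw [Real.mul_rpow (by positivity) hB, Real.mul_rpow (by positivity) hA, one_div,
          Real.rpow_rpow_inv hC hp.ne']

lemma add_sq_le_of_le_add_mul {D S T G K a : ℝ} (hD : 0 < D) (hS : 0 ≤ S) (hT : 0 ≤ T)
    (hSG : S ≤ D + a * G) (hG : G ^ 2 ≤ K * D * (D + T)) :
    (D + S) ^ 2 ≤ (8 + 2 * a ^ 2 * K) * D * (D + T) := by
  calc (D + S) ^ 2 ≤ (2 * D + a * G) ^ 2 := pow_le_pow_left₀ (by positivity) (by linarith) 2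
    _ ≤ 8 * D ^ 2 + 2 * a ^ 2 * G ^ 2 := by nlinarith [sq_nonneg (2 * D - a * G)]
    _ ≤ 8 * (D * (D + T)) + 2 * a ^ 2 * (K * D * (D + T)) := by gcongr; nlinarith
    _ = (8 + 2 * a ^ 2 * K) * D * (D + T) := by ring

section single

variable [DecidableEq V]

lemma laplacian_single_of_ne (hsymm : ∀ x y, μ x y = μ y x) {x v : V} (hv : v ≠ x) :
    laplacian μ (Pi.single x 1) v = -(μ x v / deg μ v) := by
  rw [laplacian, tsum_eq_single x fun y hy => by simp [hy, hv], hsymm]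
  simp [hv, neg_div]

lemma gradNorm_single_of_ne (hsymm : ∀ x y, μ x y = μ y x) {x v : V} (hv : v ≠ x) :
    gradNorm μ (Pi.single x 1) v = √(μ x v / (2 * deg μ v)) := by
  rw [gradNorm, tsum_eq_single x fun y hy => by simp [hy, hv], hsymm]
  simp [hv]

lemma abs_laplacian_single_self_le_one {x : V} (hnn : ∀ y, 0 ≤ μ x y) (hs : Summable (μ x))
    (hdeg : 0 < deg μ x) : |laplacian μ (Pi.single x 1) x| ≤ 1 :=
  abs_laplacian_le_one hnn hs hdeg fun y => by
    by_cases hy : y = x <;> simp [hy]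

lemma tsum_abs_single_rpow_mul_deg {p : ℝ} (hp : p ≠ 0) (x : V) :
    ∑' v, |(Pi.single x 1 : V → ℝ) v| ^ p * deg μ v = deg μ x := by
  rw [tsum_eq_single x fun v hv => by simp [hv, Real.zero_rpow hp]]
  simp

variable (hsymm : ∀ x y, μ x y = μ y x) (hnn : ∀ x y, 0 ≤ μ x y)
  (hloc : ∀ x, (support (μ x)).Finite) (hdeg : ∀ x, 0 < deg μ x) {p : ℝ} (hp : 0 < p)
include hsymm hnn hloc hdeg hp

lemma tsum_rpow_mul_deg_le_deg_add_tsum_gradNorm_single (x : V) :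
    ∑' y, μ x y ^ (p / 2) * deg μ y ^ (1 - p / 2)
      ≤ deg μ x + 2 ^ (p / 2) * ∑' v, gradNorm μ (Pi.single x 1) v ^ p * deg μ v := by
  have hp2 : p / 2 ≠ 0 := by positivity
  have hsD : Summable fun v => if v = x then deg μ x else 0 :=
    summable_of_eq_zero_off_neighbours (hloc x) fun v hv _ => if_neg hv
  have hsG : Summable fun v => gradNorm μ (Pi.single x 1) v ^ p * deg μ v :=
    summable_of_eq_zero_off_neighbours (hloc x) fun v hv h0 => by
      simp [gradNorm_single_of_ne hsymm hv, h0, Real.zero_rpow hp.ne']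
  have hsS : Summable fun y => μ x y ^ (p / 2) * deg μ y ^ (1 - p / 2) :=
    summable_of_eq_zero_off_neighbours (hloc x) fun v _ h0 => by simp [h0, Real.zero_rpow hp2]
  calc ∑' y, μ x y ^ (p / 2) * deg μ y ^ (1 - p / 2)
      ≤ ∑' v, ((if v = x then deg μ x else 0)
          + 2 ^ (p / 2) * (gradNorm μ (Pi.single x 1) v ^ p * deg μ v)) := by
        refine hsS.tsum_le_tsum (fun v => ?_) (hsD.add (hsG.mul_left _))
        by_cases hv : v = x
        · subst hv
          rw [if_pos rfl]
          have := gradNorm_nonneg (μ := μ) (Pi.single v 1) v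
          have := hdeg v
          refine le_add_of_le_of_nonneg ?_ (by positivity)
          exact rpow_mul_rpow_one_sub_le (hnn v v)
            (le_deg (hnn v) (summable_of_hasFiniteSupport (hloc v)) v) (hdeg v) (by positivity)
        · rw [if_neg hv, zero_add, gradNorm_single_of_ne hsymm hv,
            two_rpow_mul_sqrt_div_rpow_mul (hnn x v) (hdeg v)]
    _ = deg μ x + 2 ^ (p / 2) * ∑' v, gradNorm μ (Pi.single x 1) v ^ p * deg μ v := by
        rw [hsD.tsum_add (hsG.mul_left _), tsum_ite_eq, tsum_mul_left]

lemma tsum_abs_laplacian_single_rpow_mul_deg_le (x : V) :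
    ∑' v, |laplacian μ (Pi.single x 1) v| ^ p * deg μ v
      ≤ deg μ x + ∑' y, μ x y ^ p * deg μ y ^ (1 - p) := by
  have hsD : Summable fun v => if v = x then deg μ x else 0 :=
    summable_of_eq_zero_off_neighbours (hloc x) fun v hv _ => if_neg hv
  have hsL : Summable fun v => |laplacian μ (Pi.single x 1) v| ^ p * deg μ v :=
    summable_of_eq_zero_off_neighbours (hloc x) fun v hv h0 => by
      simp [laplacian_single_of_ne hsymm hv, h0, Real.zero_rpow hp.ne']
  have hsT : Summable fun y => μ x y ^ p * deg μ y ^ (1 - p) :=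
    summable_of_eq_zero_off_neighbours (hloc x) fun v _ h0 => by simp [h0, Real.zero_rpow hp.ne']
  calc ∑' v, |laplacian μ (Pi.single x 1) v| ^ p * deg μ v
      ≤ ∑' v, ((if v = x then deg μ x else 0) + μ x v ^ p * deg μ v ^ (1 - p)) := by
        refine hsL.tsum_le_tsum (fun v => ?_) (hsD.add hsT)
        by_cases hv : v = x
        · subst hv
          have hlap := abs_laplacian_single_self_le_one (hnn v)
            (summable_of_hasFiniteSupport (hloc v)) (hdeg v)
          have := hnn v v
          have := hdeg v
          rw [if_pos rfl]
          refine le_add_of_le_of_nonneg ?_ (by positivity)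
          exact mul_le_of_le_one_left (hdeg v).le
            (Real.rpow_le_one (abs_nonneg _) hlap hp.le)
        · rw [if_neg hv, zero_add, laplacian_single_of_ne hsymm hv, abs_neg,
            abs_of_nonneg (div_nonneg (hnn x v) (hdeg v).le), div_rpow_mul_self (hnn x v) (hdeg v)]
    _ = deg μ x + ∑' y, μ x y ^ p * deg μ y ^ (1 - p) := by
        rw [hsD.tsum_add hsT, tsum_ite_eq]

end single

end WeightedGraph

end

open WeightedGraph

theorem necessary_condition_for_multiplicative_inequality {V : Type*} (μ : V → V → ℝ)
    (hsymm : ∀ x y, μ x y = μ y x) (hnn : ∀ x y, 0 ≤ μ x y)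
    (hloc : ∀ x, (Function.support (μ x)).Finite)
    (hdeg : ∀ x, 0 < ∑' y, μ x y)
    (p : ℝ) (hp : 1 ≤ p) (Cp : ℝ)
    (hMI : ∀ f : V → ℝ, (Function.support f).Finite →
      ((∑' x, Real.sqrt ((∑' y, μ x y * (f x - f y) ^ 2) / (2 * ∑' y, μ x y)) ^ p
          * ∑' y, μ x y) ^ (1 / p)) ^ 2
        ≤ Cp * (∑' x, |f x| ^ p * ∑' y, μ x y) ^ (1 / p)
            * (∑' x, |(∑' y, μ x y * (f x - f y)) / ∑' y, μ x y| ^ p * ∑' y, μ x y) ^ (1 / p)) :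
    ∃ C' : ℝ, 0 < C' ∧ ∀ x : V,
      ((∑' y, μ x y) + ∑' y, (μ x y) ^ (p / 2) * (∑' z, μ y z) ^ (1 - p / 2)) ^ 2
        ≤ C' * (∑' y, μ x y)
            * ((∑' y, μ x y) + ∑' y, (μ x y) ^ p * (∑' z, μ y z) ^ (1 - p)) := by
  classical
  have hp0 : 0 < p := by linarith
  refine ⟨8 + 2 * (2 ^ (p / 2)) ^ 2 * max Cp 0 ^ p, by positivity, fun x => ?_⟩
  set δ : V → ℝ := Pi.single x 1
  have hMIδ := hMI δ ((Set.finite_singleton x).subset Pi.support_single_subset)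
  change ((∑' v, gradNorm μ δ v ^ p * deg μ v) ^ (1 / p)) ^ 2
      ≤ Cp * (∑' v, |δ v| ^ p * deg μ v) ^ (1 / p)
        * (∑' v, |laplacian μ δ v| ^ p * deg μ v) ^ (1 / p) at hMIδ
  rw [tsum_abs_single_rpow_mul_deg hp0.ne'] at hMIδ
  have hL := tsum_abs_laplacian_single_rpow_mul_deg_le hsymm hnn hloc hdeg hp0 x
  have hL0 : 0 ≤ ∑' v, |laplacian μ δ v| ^ p * deg μ v :=
    tsum_nonneg fun v => mul_nonneg (by positivity) (hdeg v).le
  have hG0 : 0 ≤ ∑' v, gradNorm μ δ v ^ p * deg μ v :=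
    tsum_nonneg fun v => mul_nonneg (Real.rpow_nonneg (gradNorm_nonneg _ _) _) (hdeg v).le
  have hG := sq_le_rpow_mul_mul_of_rpow_inv_sq_le hp0 hG0 (hdeg x).le hL0 (le_max_left _ _)
    (le_max_right _ _) hMIδ
  refine add_sq_le_of_le_add_mul (hdeg x) ?_ ?_
    (tsum_rpow_mul_deg_le_deg_add_tsum_gradNorm_single hsymm hnn hloc hdeg hp0 x)
    (hG.trans (mul_le_mul_of_nonneg_left hL (mul_nonneg (by positivity) (hdeg x).le)))
  all_goals exact tsum_nonneg fun v =>
    mul_nonneg (Real.rpow_nonneg (hnn x v) _) (Real.rpow_nonneg (hdeg v).le _)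
end

section
/- Let T be the infinite tree where each vertex in layer i has d_i successors, with d_i = 1 for i ≤ 3 and for even i ≥ 4, and d_{2n+1} = 2n+1 for n ≥ 2; put μ ≡ 1 on edges and ν = deg. Then for every p ∈ (1,2) there is NO constant C_p such that the inequality (deg_x + Σ_{y∼x} μ_{xy}^{p/2} deg_y^{1-p/2})² ≤ C_p deg_x (deg_x + Σ_{y∼x} μ_{xy}^p deg_y^{1-p}) holds at all vertices x. Consequently the multiplicative inequality ‖|∇f|‖²_{ℓ^p} ≤ C ‖f‖_{ℓ^p}‖Δ̃f‖_{ℓ^p} fails on this tree for p ∈ (1,2). -/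
open scoped Classical

/-- Branching numbers: each vertex in layer `i` has `d i` successors. -/
def treeBranch (i : ℕ) : ℕ := if i ≤ 3 then 1 else if i % 2 = 0 then 1 else i

/-- Number of vertices in layer `i`. -/
def treeWidth : ℕ → ℕ
  | 0 => 1
  | i + 1 => treeWidth i * treeBranch i

/-- Vertex set of the tree: a vertex is a layer together with an index in that layer. -/
abbrev TreeV : Type := (i : ℕ) × Fin (treeWidth i)

/-- Adjacency: the parent of the vertex of index `k` in layer `i+1` is the vertex of index
`k / d i` in layer `i`. -/
def treeAdj (u v : TreeV) : Prop :=
  (v.1 = u.1 + 1 ∧ v.2.val / treeBranch u.1 = u.2.val) ∨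
  (u.1 = v.1 + 1 ∧ u.2.val / treeBranch v.1 = v.2.val)

/-- Edge weights `μ ≡ 1` on edges. -/
noncomputable def treeMu (u v : TreeV) : ℝ := if treeAdj u v then 1 else 0


lemma treeBranch_pos (i : ℕ) : 0 < treeBranch i := by
  unfold treeBranch; split_ifs <;> omega

lemma treeWidth_pos (i : ℕ) : 0 < treeWidth i := by
  induction i with
  | zero => exact one_pos
  | succ n ih => exact Nat.mul_pos ih (treeBranch_pos n)

def vtx (i : ℕ) : TreeV := ⟨i, ⟨0, treeWidth_pos i⟩⟩

lemma vtx_ne {i j : ℕ} (h : i ≠ j) : vtx i ≠ vtx j :=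
  fun hc => h (congrArg Sigma.fst hc)

lemma hle_child (s : ℕ) : treeBranch (s+1) ≤ treeWidth (s+2) := by
  have h : treeWidth (s+2) = treeWidth (s+1) * treeBranch (s+1) := rfl
  rw [h]; exact Nat.le_mul_of_pos_left _ (treeWidth_pos (s+1))

def childV (s : ℕ) (m : Fin (treeBranch (s+1))) : TreeV := ⟨s+2, Fin.castLE (hle_child s) m⟩

lemma adj_vtx_iff (s : ℕ) (y : TreeV) :
    treeAdj (vtx (s+1)) y ↔ y = vtx s ∨ ∃ m, y = childV s m := by
  obtain ⟨j, m⟩ := y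
  constructor
  · rintro (⟨h1, h2⟩ | ⟨h1, h2⟩)
    · simp only [vtx] at h1 h2
      subst h1
      right
      have hm : m.val < treeBranch (s+1) := by
        by_contra hc
        push_neg at hc
        have := (Nat.one_le_div_iff (treeBranch_pos (s+1))).2 hc
        omega
      exact ⟨⟨m.val, hm⟩, congrArg (Sigma.mk (s+2)) (Fin.ext rfl)⟩
    · simp only [vtx] at h1 h2
      left
      have hj : j = s := by omega
      subst hj
      rw [Nat.zero_div] at h2
      exact congrArg (Sigma.mk j) (Fin.ext h2.symm)
  · rintro (h | ⟨m, h⟩) <;> rw [h]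
    · right
      exact ⟨rfl, by simp [vtx, Nat.zero_div]⟩
    · left
      exact ⟨rfl, by simp [vtx, childV, Nat.div_eq_of_lt m.isLt]⟩

lemma treeAdj_comm (u v : TreeV) : treeAdj u v ↔ treeAdj v u := by
  unfold treeAdj; tauto

noncomputable def nbr (s : ℕ) : Finset TreeV := insert (vtx s) (Finset.univ.image (childV s))

lemma childV_injective (s : ℕ) : Function.Injective (childV s) := by
  intro m1 m2 h
  have h2 := congrArg Sigma.fst h
  simp only [childV] at h2 h
  have := Sigma.mk.inj_iff.1 h
  exact Fin.castLE_injective _ (eq_of_heq this.2)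

lemma deg_vtx (s : ℕ) : ∑' y, treeMu (vtx (s+1)) y = ((1 + treeBranch (s+1) : ℕ) : ℝ) := by
  rw [tsum_eq_sum (s := nbr s) (by
    intro y hy
    rw [treeMu, if_neg]
    intro hadj
    apply hy
    rcases (adj_vtx_iff s y).1 hadj with h | ⟨m, h⟩
    · exact Finset.mem_insert.2 (Or.inl h)
    · exact Finset.mem_insert.2 (Or.inr (Finset.mem_image.2 ⟨m, Finset.mem_univ m, h.symm⟩)))]
  have hall : ∀ y ∈ nbr s, treeMu (vtx (s+1)) y = 1 := by
    intro y hy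
    rw [treeMu, if_pos]
    apply (adj_vtx_iff s y).2
    rcases Finset.mem_insert.1 hy with h | h
    · exact Or.inl h
    · obtain ⟨m, _, hm⟩ := Finset.mem_image.1 h
      exact Or.inr ⟨m, hm.symm⟩
  rw [Finset.sum_congr rfl hall, Finset.sum_const, nsmul_eq_mul, mul_one]
  congr 1
  rw [nbr, Finset.card_insert_of_notMem, Finset.card_image_of_injective _ (childV_injective s)]
  · rw [Finset.card_univ, Fintype.card_fin, Nat.add_comm]
  · intro hc
    obtain ⟨m, _, hm⟩ := Finset.mem_image.1 hc
    have := congrArg Sigma.fst hm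
    simp [childV, vtx] at this

lemma branch_odd (i : ℕ) (h4 : 4 ≤ i) (h2 : i % 2 = 1) : treeBranch i = i := by
  unfold treeBranch; rw [if_neg (by omega), if_neg (by omega)]

lemma branch_even (i : ℕ) (h2 : i % 2 = 0) (h4 : 4 ≤ i) : treeBranch i = 1 := by
  unfold treeBranch; rw [if_neg (by omega), if_pos h2]

lemma deg_layer {i : ℕ} (hi : 1 ≤ i) : ∑' y, treeMu (vtx i) y = ((1 + treeBranch i : ℕ) : ℝ) := by
  obtain ⟨s, rfl⟩ := Nat.exists_eq_add_of_le' hi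
  exact deg_vtx s

lemma adj_x_iff (s : ℕ) (hb : treeBranch (s+1) = 1) (y : TreeV) :
    treeAdj (vtx (s+1)) y ↔ y = vtx s ∨ y = vtx (s+2) := by
  rw [adj_vtx_iff]
  apply or_congr Iff.rfl
  constructor
  · rintro ⟨m, rfl⟩
    have hm : m.val = 0 := by have := m.isLt; omega
    exact congrArg (Sigma.mk (s+2)) (Fin.ext hm)
  · rintro rfl
    exact ⟨⟨0, treeBranch_pos (s+1)⟩, congrArg (Sigma.mk (s+2)) (Fin.ext rfl)⟩

lemma adj_down (s : ℕ) : treeAdj (vtx (s+1)) (vtx s) :=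
  (adj_vtx_iff s (vtx s)).2 (Or.inl rfl)

lemma treeMu_adj {u v : TreeV} (h : treeAdj u v) : treeMu u v = 1 := if_pos h

lemma treeMu_nadj {u v : TreeV} (h : ¬ treeAdj u v) : treeMu u v = 0 := if_neg h

lemma tsum_pair {f : TreeV → ℝ} {a b : TreeV} (hab : a ≠ b)
    (h : ∀ y, y ≠ a → y ≠ b → f y = 0) : ∑' y, f y = f a + f b := by
  rw [tsum_eq_sum (s := {a, b}) (by intro y hy; simp at hy; exact h y hy.1 hy.2)]
  exact Finset.sum_pair hab

lemma tsum_triple {f : TreeV → ℝ} {a b c : TreeV} (hab : a ≠ b) (hac : a ≠ c) (hbc : b ≠ c)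
    (h : ∀ y, y ≠ a → y ≠ b → y ≠ c → f y = 0) : ∑' y, f y = f a + (f b + f c) := by
  rw [tsum_eq_sum (s := {a, b, c}) (by intro y hy; simp at hy; exact h y hy.1 hy.2.1 hy.2.2)]
  rw [Finset.sum_insert (by simp [hab, hac]), Finset.sum_pair hbc]

lemma part1 (p : ℝ) (hp1 : 1 < p) (hp2 : p < 2) :
    ¬ ∃ C : ℝ, ∀ x : TreeV,
      ((∑' y, treeMu x y) +
          ∑' y, (treeMu x y) ^ (p / 2) * (∑' z, treeMu y z) ^ (1 - p / 2)) ^ 2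
        ≤ C * (∑' y, treeMu x y)
            * ((∑' y, treeMu x y) + ∑' y, (treeMu x y) ^ p * (∑' z, treeMu y z) ^ (1 - p)) := by
  rintro ⟨C, hC⟩
  have he : 0 < 1 - p/2 := by linarith
  set M : ℝ := 8*|C| + 2 with hM_def
  have hM0 : 0 ≤ M := by positivity
  set n : ℕ := ⌈M ^ (1/(1-p/2))⌉₊ with hn_def
  set a : TreeV := vtx (2*n+5) with ha_def
  set x : TreeV := vtx (2*n+5+1) with hx_def
  set b : TreeV := vtx (2*n+5+2) with hb_def
  set A : ℝ := 2*(n:ℝ)+6 with hA_def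
  set B : ℝ := 2*(n:ℝ)+8 with hB_def
  have hbranch_even : treeBranch (2*n+5+1) = 1 := branch_even _ (by omega) (by omega)
  have degA : ∑' y, treeMu a y = A := by
    rw [ha_def, deg_layer (by omega), branch_odd (2*n+5) (by omega) (by omega)]
    push_cast; ring
  have degX : ∑' y, treeMu x y = 2 := by
    rw [hx_def, deg_layer (by omega), hbranch_even]; norm_num
  have degB : ∑' y, treeMu b y = B := by
    rw [hb_def, deg_layer (by omega), branch_odd (2*n+5+2) (by omega) (by omega)]
    push_cast; ring
  have hadj_xa : treeAdj x a := adj_down (2*n+5)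
  have hadj_xb : treeAdj x b := (adj_x_iff (2*n+5) hbranch_even b).2 (Or.inr rfl)
  have hnadj : ∀ y : TreeV, y ≠ a → y ≠ b → treeMu x y = 0 := by
    intro y hya hyb
    apply treeMu_nadj
    intro hadj
    rcases (adj_x_iff (2*n+5) hbranch_even y).1 hadj with h | h
    · exact hya h
    · exact hyb h
  have hab : a ≠ b := vtx_ne (by omega)
  have hS1 : ∑' y, (treeMu x y) ^ (p / 2) * (∑' z, treeMu y z) ^ (1 - p / 2)
      = A ^ (1 - p/2) + B ^ (1 - p/2) := by
    rw [tsum_pair hab (by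
      intro y hya hyb
      rw [hnadj y hya hyb, Real.zero_rpow (by positivity), zero_mul])]
    rw [treeMu_adj hadj_xa, treeMu_adj hadj_xb, degA, degB, Real.one_rpow, one_mul, one_mul]
  have hS2 : ∑' y, (treeMu x y) ^ p * (∑' z, treeMu y z) ^ (1 - p)
      = A ^ (1 - p) + B ^ (1 - p) := by
    rw [tsum_pair hab (by
      intro y hya hyb
      rw [hnadj y hya hyb, Real.zero_rpow (by positivity), zero_mul])]
    rw [treeMu_adj hadj_xa, treeMu_adj hadj_xb, degA, degB, Real.one_rpow, one_mul, one_mul]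
  have hx := hC x
  rw [degX, hS1, hS2] at hx
  have hn0 : (0:ℝ) ≤ (n:ℝ) := Nat.cast_nonneg n
  have hA1 : 1 ≤ A := by rw [hA_def]; linarith
  have hB1 : 1 ≤ B := by rw [hB_def]; linarith
  have hAe : 0 ≤ A ^ (1 - p/2) := Real.rpow_nonneg (by linarith) _
  have hBe : 0 ≤ B ^ (1 - p/2) := Real.rpow_nonneg (by linarith) _
  have hA1p : A ^ (1 - p) ≤ 1 := Real.rpow_le_one_of_one_le_of_nonpos hA1 (by linarith)
  have hB1p : B ^ (1 - p) ≤ 1 := Real.rpow_le_one_of_one_le_of_nonpos hB1 (by linarith)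
  have hA1p0 : 0 ≤ A ^ (1 - p) := Real.rpow_nonneg (by linarith) _
  have hB1p0 : 0 ≤ B ^ (1 - p) := Real.rpow_nonneg (by linarith) _
  -- RHS bound
  have hRHS : C * 2 * (2 + (A ^ (1 - p) + B ^ (1 - p))) ≤ 8 * |C| := by
    nlinarith [le_abs_self C, abs_nonneg C,
      mul_nonneg (sub_nonneg.2 (le_abs_self C)) (by linarith : (0:ℝ) ≤ 2 + (A ^ (1-p) + B ^ (1-p))),
      mul_nonneg (abs_nonneg C) (by linarith : (0:ℝ) ≤ 4 - (2 + (A ^ (1-p) + B ^ (1-p))))]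
  -- LHS bound
  have hLHS : A ^ (1 - p/2) ≤ (2 + (A ^ (1 - p/2) + B ^ (1 - p/2))) ^ 2 := by
    nlinarith [sq_nonneg (A ^ (1 - p/2) + B ^ (1 - p/2))]
  -- A^(1-p/2) is large
  have hbig : M < A ^ (1 - p/2) := by
    have h1 : M ^ (1/(1-p/2)) < A := by
      have := Nat.le_ceil (M ^ (1/(1-p/2)))
      rw [hA_def]
      have : M ^ (1/(1-p/2)) ≤ (n:ℝ) := by exact_mod_cast this
      linarith
    have h2 : (M ^ (1/(1-p/2))) ^ (1-p/2) < A ^ (1-p/2) :=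
      Real.rpow_lt_rpow (Real.rpow_nonneg hM0 _) h1 he
    have h3 : (M ^ (1/(1-p/2))) ^ (1-p/2) = M := by
      rw [← Real.rpow_mul hM0, one_div, inv_mul_cancel₀ he.ne', Real.rpow_one]
    linarith
  linarith

set_option maxHeartbeats 1000000 in
lemma part2 (p : ℝ) (hp1 : 1 < p) (hp2 : p < 2) :
    ¬ ∃ C : ℝ, ∀ f : TreeV → ℝ, (Function.support f).Finite →
      ((∑' x, Real.sqrt ((∑' y, treeMu x y * (f x - f y) ^ 2) / (2 * ∑' y, treeMu x y)) ^ p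
          * ∑' y, treeMu x y) ^ (1 / p)) ^ 2
        ≤ C * (∑' x, |f x| ^ p * ∑' y, treeMu x y) ^ (1 / p)
            * (∑' x, |(∑' y, treeMu x y * (f x - f y)) / ∑' y, treeMu x y| ^ p
                * ∑' y, treeMu x y) ^ (1 / p) := by
  rintro ⟨C, hC⟩
  have hp0 : (0:ℝ) < p := by linarith
  have hpne : p ≠ 0 := ne_of_gt hp0
  have he : 0 < 1 - p/2 := by linarith
  set M : ℝ := 32*|C| + 4 with hM_def
  have hM0 : 0 ≤ M := by positivity
  set n : ℕ := ⌈M ^ (1/(1-p/2))⌉₊ with hn_def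
  set a : TreeV := vtx (2*n+5) with ha_def
  set x : TreeV := vtx (2*n+5+1) with hx_def
  set b : TreeV := vtx (2*n+5+2) with hb_def
  set A : ℝ := 2*(n:ℝ)+6 with hA_def
  set B : ℝ := 2*(n:ℝ)+8 with hB_def
  have hbranch_even : treeBranch (2*n+5+1) = 1 := branch_even _ (by omega) (by omega)
  have degA : ∑' y, treeMu a y = A := by
    rw [ha_def, deg_layer (by omega), branch_odd (2*n+5) (by omega) (by omega)]
    push_cast; ring
  have degX : ∑' y, treeMu x y = 2 := by
    rw [hx_def, deg_layer (by omega), hbranch_even]; norm_num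
  have degB : ∑' y, treeMu b y = B := by
    rw [hb_def, deg_layer (by omega), branch_odd (2*n+5+2) (by omega) (by omega)]
    push_cast; ring
  have hadj_xa : treeAdj x a := adj_down (2*n+5)
  have hadj_xb : treeAdj x b := (adj_x_iff (2*n+5) hbranch_even b).2 (Or.inr rfl)
  have hadj_ax : treeAdj a x := (treeAdj_comm x a).1 hadj_xa
  have hadj_bx : treeAdj b x := (treeAdj_comm x b).1 hadj_xb
  have hnadj : ∀ y : TreeV, y ≠ a → y ≠ b → treeMu x y = 0 := by
    intro y hya hyb
    apply treeMu_nadj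
    intro hadj
    rcases (adj_x_iff (2*n+5) hbranch_even y).1 hadj with h | h
    · exact hya h
    · exact hyb h
  have hab : a ≠ b := vtx_ne (by omega)
  have hax : a ≠ x := vtx_ne (by omega)
  have hxb : x ≠ b := vtx_ne (by omega)
  -- the indicator function
  set f : TreeV → ℝ := fun y => if y = x then 1 else 0 with hf_def
  have hfx : f x = 1 := if_pos rfl
  have hf0 : ∀ y, y ≠ x → f y = 0 := fun y hy => if_neg hy
  have hsupp : (Function.support f).Finite := by
    apply Set.Finite.subset (Set.finite_singleton x)
    intro y hy
    simp only [Set.mem_singleton_iff]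
    by_contra h
    exact (Function.mem_support.1 hy) (hf0 y h)
  -- inner sums
  have I1x : ∑' y, treeMu x y * (f x - f y) = 2 := by
    rw [tsum_pair hab (fun y hya hyb => by rw [hnadj y hya hyb, zero_mul])]
    simp only [treeMu_adj hadj_xa, treeMu_adj hadj_xb, hfx, hf0 a hax, hf0 b (Ne.symm hxb)]
    norm_num
  have I2x : ∑' y, treeMu x y * (f x - f y) ^ 2 = 2 := by
    rw [tsum_pair hab (fun y hya hyb => by rw [hnadj y hya hyb, zero_mul])]
    simp only [treeMu_adj hadj_xa, treeMu_adj hadj_xb, hfx, hf0 a hax, hf0 b (Ne.symm hxb)]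
    norm_num
  have I1a : ∑' y, treeMu a y * (f a - f y) = -1 := by
    rw [tsum_eq_single x (fun y hy => by rw [hf0 y hy, hf0 a hax, sub_zero, mul_zero])]
    simp only [treeMu_adj hadj_ax, hfx, hf0 a hax]
    norm_num
  have I2a : ∑' y, treeMu a y * (f a - f y) ^ 2 = 1 := by
    rw [tsum_eq_single x (fun y hy => by rw [hf0 y hy, hf0 a hax, sub_zero]; norm_num)]
    simp only [treeMu_adj hadj_ax, hfx, hf0 a hax]
    norm_num
  have I1b : ∑' y, treeMu b y * (f b - f y) = -1 := by
    rw [tsum_eq_single x (fun y hy => by rw [hf0 y hy, hf0 b (Ne.symm hxb), sub_zero, mul_zero])]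
    simp only [treeMu_adj hadj_bx, hfx, hf0 b (Ne.symm hxb)]
    norm_num
  have I2b : ∑' y, treeMu b y * (f b - f y) ^ 2 = 1 := by
    rw [tsum_eq_single x (fun y hy => by rw [hf0 y hy, hf0 b (Ne.symm hxb), sub_zero]; norm_num)]
    simp only [treeMu_adj hadj_bx, hfx, hf0 b (Ne.symm hxb)]
    norm_num
  -- vanishing away from a, x, b
  have hmu_wx : ∀ w : TreeV, w ≠ a → w ≠ b → treeMu w x = 0 := by
    intro w hwa hwb
    apply treeMu_nadj
    intro hadj
    rcases (adj_x_iff (2*n+5) hbranch_even w).1 ((treeAdj_comm w x).1 hadj) with h | h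
    · exact hwa h
    · exact hwb h
  have hzero1 : ∀ w : TreeV, w ≠ a → w ≠ x → w ≠ b →
      ∑' y, treeMu w y * (f w - f y) = 0 := by
    intro w hwa hwx hwb
    have : ∀ y, treeMu w y * (f w - f y) = 0 := by
      intro y
      by_cases hy : y = x
      · rw [hy, hmu_wx w hwa hwb, zero_mul]
      · rw [hf0 y hy, hf0 w hwx, sub_zero, mul_zero]
    exact (tsum_congr this).trans tsum_zero
  have hzero2 : ∀ w : TreeV, w ≠ a → w ≠ x → w ≠ b →
      ∑' y, treeMu w y * (f w - f y) ^ 2 = 0 := by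
    intro w hwa hwx hwb
    have : ∀ y, treeMu w y * (f w - f y) ^ 2 = 0 := by
      intro y
      by_cases hy : y = x
      · rw [hy, hmu_wx w hwa hwb, zero_mul]
      · rw [hf0 y hy, hf0 w hwx, sub_zero]; norm_num
    exact (tsum_congr this).trans tsum_zero
  -- outer sums
  have hNorm : (∑' w, |f w| ^ p * ∑' y, treeMu w y) = 2 := by
    rw [tsum_eq_single x (fun w hw => by
      rw [hf0 w hw, abs_zero, Real.zero_rpow hpne, zero_mul])]
    rw [hfx, abs_one, Real.one_rpow, one_mul, degX]
  have hD : (∑' w, |(∑' y, treeMu w y * (f w - f y)) / ∑' y, treeMu w y| ^ p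
      * ∑' y, treeMu w y)
      = |(-1)/A| ^ p * A + (|(2:ℝ)/2| ^ p * 2 + |(-1)/B| ^ p * B) := by
    rw [tsum_triple hax hab hxb (fun w hwa hwx hwb => by
      rw [hzero1 w hwa hwx hwb, zero_div, abs_zero, Real.zero_rpow hpne, zero_mul])]
    simp only [I1a, I1x, I1b, degA, degX, degB]
  have hG : (∑' w, Real.sqrt ((∑' y, treeMu w y * (f w - f y) ^ 2)
      / (2 * ∑' y, treeMu w y)) ^ p * ∑' y, treeMu w y)
      = Real.sqrt (1/(2*A)) ^ p * A
        + (Real.sqrt ((2:ℝ)/(2*2)) ^ p * 2 + Real.sqrt (1/(2*B)) ^ p * B) := by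
    rw [tsum_triple hax hab hxb (fun w hwa hwx hwb => by
      rw [hzero2 w hwa hwx hwb, zero_div, Real.sqrt_zero, Real.zero_rpow hpne, zero_mul])]
    simp only [I2a, I2x, I2b, degA, degX, degB]
  -- abbreviations
  set DD : ℝ := |(-1)/A| ^ p * A + (|(2:ℝ)/2| ^ p * 2 + |(-1)/B| ^ p * B) with hDD
  set GG : ℝ := Real.sqrt (1/(2*A)) ^ p * A
        + (Real.sqrt ((2:ℝ)/(2*2)) ^ p * 2 + Real.sqrt (1/(2*B)) ^ p * B) with hGG
  have hx2 := hC f hsupp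
  rw [hNorm, hD, hG] at hx2
  clear_value DD GG
  -- basic positivity
  have hn0 : (0:ℝ) ≤ (n:ℝ) := Nat.cast_nonneg n
  have hA1 : 1 ≤ A := by rw [hA_def]; linarith
  have hB1 : 1 ≤ B := by rw [hB_def]; linarith
  have hApos : 0 < A := by linarith
  have hBpos : 0 < B := by linarith
  -- D bounds
  have hDterm : ∀ r : ℝ, 1 ≤ r → |(-1)/r| ^ p * r ≤ 1 := by
    intro r hr
    have hr0 : 0 < r := by linarith
    have h1 : |(-1)/r| = r⁻¹ := by
      rw [abs_div, abs_neg, abs_one, abs_of_pos hr0, one_div]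
    rw [h1, Real.inv_rpow hr0.le]
    have h2 : r ≤ r ^ p := by
      nth_rewrite 1 [← Real.rpow_one r]
      exact Real.rpow_le_rpow_of_exponent_le hr hp1.le
    calc (r^p)⁻¹ * r ≤ (r^p)⁻¹ * r^p :=
          mul_le_mul_of_nonneg_left h2 (inv_nonneg.2 (Real.rpow_nonneg hr0.le p))
      _ = 1 := inv_mul_cancel₀ (ne_of_gt (Real.rpow_pos_of_pos hr0 p))
  have hDmid : |(2:ℝ)/2| ^ p * 2 = 2 := by norm_num
  have hD4 : DD ≤ 4 := by
    rw [hDD]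
    have h1 := hDterm A hA1
    have h2 := hDterm B hB1
    linarith [hDmid]
  have hD0 : 0 ≤ DD := by rw [hDD]; positivity
  -- G lower bound
  have hGa : A ^ (1 - p/2) / 2 ≤ Real.sqrt (1/(2*A)) ^ p * A := by
    have key : Real.sqrt (1/(2*A)) ^ p * A = A / ((2:ℝ)^(p/2) * A^(p/2)) := by
      rw [Real.sqrt_eq_rpow, ← Real.rpow_mul (by positivity),
          (by ring : (1:ℝ)/2 * p = p/2), one_div, Real.inv_rpow (by positivity),
          Real.mul_rpow (by norm_num) hApos.le, inv_mul_eq_div]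
    rw [key]
    have h2q : (2:ℝ)^(p/2) ≤ 2 := by
      calc (2:ℝ)^(p/2) ≤ (2:ℝ)^(1:ℝ) :=
            Real.rpow_le_rpow_of_exponent_le one_le_two (by linarith)
        _ = 2 := Real.rpow_one 2
    have hAq : (0:ℝ) < A^(p/2) := Real.rpow_pos_of_pos hApos _
    have h2q0 : (0:ℝ) < (2:ℝ)^(p/2) := Real.rpow_pos_of_pos two_pos _
    calc A ^ (1-p/2) / 2 = A / (2 * A^(p/2)) := by
          rw [Real.rpow_sub hApos, Real.rpow_one, div_div, mul_comm]
      _ ≤ A / ((2:ℝ)^(p/2) * A^(p/2)) := by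
          gcongr <;> first | positivity | exact h2q
  have hGx0 : 0 ≤ Real.sqrt ((2:ℝ)/(2*2)) ^ p * 2 := by positivity
  have hGb0 : 0 ≤ Real.sqrt (1/(2*B)) ^ p * B := by positivity
  have hGlb : A ^ (1 - p/2) / 2 ≤ GG := by rw [hGG]; linarith
  -- A^(1-p/2) is large
  have hbig : M < A ^ (1 - p/2) := by
    have h1 : M ^ (1/(1-p/2)) < A := by
      have h := Nat.le_ceil (M ^ (1/(1-p/2)))
      have h' : M ^ (1/(1-p/2)) ≤ (n:ℝ) := by exact_mod_cast h
      rw [hA_def]; linarith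
    have h2 : (M ^ (1/(1-p/2))) ^ (1-p/2) < A ^ (1-p/2) :=
      Real.rpow_lt_rpow (Real.rpow_nonneg hM0 _) h1 he
    have h3 : (M ^ (1/(1-p/2))) ^ (1-p/2) = M := by
      rw [← Real.rpow_mul hM0, one_div, inv_mul_cancel₀ he.ne', Real.rpow_one]
    linarith
  have habs : 0 ≤ |C| := abs_nonneg C
  have hbig' : 32 * |C| + 4 < A ^ (1 - p/2) := by rw [hM_def] at hbig; exact hbig
  have hG1 : 1 ≤ GG := by linarith
  have hG0 : 0 ≤ GG := by linarith
  -- LHS bound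
  have hLHS : GG ≤ (GG ^ (1/p)) ^ 2 := by
    have h1 : (GG ^ (1/p)) ^ (2:ℕ) = GG ^ ((1/p) * ((2:ℕ):ℝ)) := by
      rw [← Real.rpow_natCast (GG ^ (1/p)) 2, ← Real.rpow_mul hG0]
    rw [h1]
    nth_rewrite 1 [← Real.rpow_one GG]
    apply Real.rpow_le_rpow_of_exponent_le hG1
    have : (1/p) * ((2:ℕ):ℝ) = 2/p := by push_cast; ring
    rw [this, le_div_iff₀ hp0]; linarith
  -- RHS bound
  have h2p : (2:ℝ)^((1:ℝ)/p) ≤ 2 := by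
    calc (2:ℝ)^((1:ℝ)/p) ≤ (2:ℝ)^(1:ℝ) := by
          apply Real.rpow_le_rpow_of_exponent_le one_le_two
          rw [div_le_one hp0]; linarith
      _ = 2 := Real.rpow_one 2
  have h2p0 : (0:ℝ) ≤ (2:ℝ)^((1:ℝ)/p) := Real.rpow_nonneg (by norm_num) _
  have hDp : DD ^ ((1:ℝ)/p) ≤ 4 := by
    calc DD ^ ((1:ℝ)/p) ≤ (4:ℝ) ^ ((1:ℝ)/p) :=
          Real.rpow_le_rpow hD0 hD4 (by positivity)
      _ ≤ (4:ℝ)^(1:ℝ) := by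
          apply Real.rpow_le_rpow_of_exponent_le (by norm_num)
          rw [div_le_one hp0]; linarith
      _ = 4 := Real.rpow_one 4
  have hDp0 : (0:ℝ) ≤ DD ^ ((1:ℝ)/p) := Real.rpow_nonneg hD0 _
  have huv : (2:ℝ)^((1:ℝ)/p) * DD^((1:ℝ)/p) ≤ 8 := by
    calc (2:ℝ)^((1:ℝ)/p) * DD^((1:ℝ)/p) ≤ 2 * 4 :=
          mul_le_mul h2p hDp hDp0 (by norm_num)
      _ = 8 := by norm_num
  have hRHS : C * (2:ℝ)^((1:ℝ)/p) * DD ^ ((1:ℝ)/p) ≤ 16 * |C| := by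
    calc C * (2:ℝ)^((1:ℝ)/p) * DD^((1:ℝ)/p)
        = C * ((2:ℝ)^((1:ℝ)/p) * DD^((1:ℝ)/p)) := by ring
      _ ≤ |C| * ((2:ℝ)^((1:ℝ)/p) * DD^((1:ℝ)/p)) :=
          mul_le_mul_of_nonneg_right (le_abs_self C) (mul_nonneg h2p0 hDp0)
      _ ≤ |C| * 8 := mul_le_mul_of_nonneg_left huv habs
      _ ≤ 16 * |C| := by linarith
  linarith

theorem tree_counterexample (p : ℝ) (hp1 : 1 < p) (hp2 : p < 2) :
    (¬ ∃ C : ℝ, ∀ x : TreeV,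
      ((∑' y, treeMu x y) +
          ∑' y, (treeMu x y) ^ (p / 2) * (∑' z, treeMu y z) ^ (1 - p / 2)) ^ 2
        ≤ C * (∑' y, treeMu x y)
            * ((∑' y, treeMu x y) + ∑' y, (treeMu x y) ^ p * (∑' z, treeMu y z) ^ (1 - p))) ∧
    (¬ ∃ C : ℝ, ∀ f : TreeV → ℝ, (Function.support f).Finite →
      ((∑' x, Real.sqrt ((∑' y, treeMu x y * (f x - f y) ^ 2) / (2 * ∑' y, treeMu x y)) ^ p
          * ∑' y, treeMu x y) ^ (1 / p)) ^ 2
        ≤ C * (∑' x, |f x| ^ p * ∑' y, treeMu x y) ^ (1 / p)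
            * (∑' x, |(∑' y, treeMu x y * (f x - f y)) / ∑' y, treeMu x y| ^ p
                * ∑' y, treeMu x y) ^ (1 / p)) := by
  exact ⟨part1 p hp1 hp2, part2 p hp1 hp2⟩
end

section
/- Let G = (V,E,ν,μ) be a connected locally finite weighted graph with sup_x deg_x/ν_x < ∞ whose Cheeger constant h := inf_{Ω finite} μ(∂Ω)/ν(Ω) is positive (equivalently, the ℓ¹ Sobolev inequality ‖f‖_{ℓ¹(V,ν)} ≤ C‖|Df|‖_{ℓ¹(E,μ)} holds for finitely supported f). Then for every p ∈ [1,∞) there is a constant C_p such that ‖f‖_{ℓ^p(V,ν)} ≤ C_p ‖|Df|‖_{ℓ^p(E,μ)} for all finitely supported f : V → ℝ. -/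
/-!
Peeling off the lowest level set of a nonnegative function `g` (at height `m = min g` on its
support) writes `g = m • 𝟙_S + (g - m)⁺`, and both the mass `∑ g ν` and the `ℓ¹` energy split
additively along this decomposition. The Cheeger inequality for `S` and induction on the support
then give the `ℓ¹` Sobolev inequality `h ‖g‖₁ ≤ ½ ∑∑ μ |g x - g y|`.

For `p ≥ 1` apply it to `g = |f| ^ p`. Since `| |a|^p - |b|^p | ≤ p |a - b| (|a| + |b|)^(p-1)`,
Hölder's inequality bounds the energy of `|f| ^ p` by `p ‖Df‖_p ‖ |f(x)| + |f(y)| ‖_p^(p-1)`, and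
the last norm is at most `(2^p M) ^ (1/p) ‖f‖_p` when the degree is bounded by `M ν`.
Dividing by `‖f‖_p^(p-1)` gives the `ℓ^p` inequality. Every sum involved is finite: all of them
live on the support of `f` together with its neighbours.
-/

open scoped Classical

open Finset

theorem abs_sub_eq_abs_min_sub_add_abs_max_sub (a b m : ℝ) :
    |a - b| = |min a m - min b m| + |max (a - m) 0 - max (b - m) 0| := by
  rcases le_total a m with ha | ha <;> rcases le_total b m with hb | hb <;>
    simp [ha, hb, abs_eq_max_neg, max_def] <;> grind

theorem rpow_sub_rpow_le_mul_rpow_sub_one {p a b : ℝ} (hp : 1 ≤ p) (hb : 0 ≤ b) (hba : b ≤ a) :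
    a ^ p - b ^ p ≤ p * (a - b) * a ^ (p - 1) := by
  rcases (hb.trans hba).eq_or_lt with rfl | ha
  · obtain rfl : b = 0 := le_antisymm hba hb
    simp
  have hbern := one_add_mul_self_le_rpow_one_add (s := b / a - 1)
    (by linarith [div_nonneg hb ha.le]) hp
  rw [add_sub_cancel, Real.div_rpow hb ha.le, le_div_iff₀ (Real.rpow_pos_of_pos ha p)] at hbern
  rw [Real.rpow_sub_one ha.ne']
  field_simp at hbern ⊢
  nlinarith [hbern]

theorem abs_abs_rpow_sub_abs_rpow_le {p : ℝ} (hp : 1 ≤ p) (a b : ℝ) :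
    abs (|a| ^ p - |b| ^ p) ≤ p * |a - b| * (|a| + |b|) ^ (p - 1) := by
  wlog hba : |b| ≤ |a| generalizing a b
  · rw [abs_sub_comm, abs_sub_comm a, add_comm]
    exact this b a (le_of_not_ge hba)
  rw [abs_of_nonneg (sub_nonneg.2 (Real.rpow_le_rpow (abs_nonneg b) hba (by linarith)))]
  calc |a| ^ p - |b| ^ p ≤ p * (|a| - |b|) * |a| ^ (p - 1) :=
        rpow_sub_rpow_le_mul_rpow_sub_one hp (abs_nonneg b) hba
    _ ≤ p * |a - b| * (|a| + |b|) ^ (p - 1) := by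
        gcongr ?_ * ?_ * ?_
        · exact abs_sub_abs_le_abs_sub a b
        · exact Real.rpow_le_rpow (abs_nonneg a) (le_add_of_nonneg_right (abs_nonneg b))
            (by linarith)

theorem add_rpow_le_two_rpow_sub_one_mul {p a b : ℝ} (hp : 1 ≤ p) (ha : 0 ≤ a) (hb : 0 ≤ b) :
    (a + b) ^ p ≤ 2 ^ (p - 1) * (a ^ p + b ^ p) := by
  exact_mod_cast NNReal.rpow_add_le_mul_rpow_add_rpow ⟨a, ha⟩ ⟨b, hb⟩ hp

theorem sum_mul_mul_rpow_sub_one_le {ι : Type*} (s : Finset ι) {p : ℝ} (hp : 1 ≤ p)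
    {w a b : ι → ℝ} (hw : ∀ i, 0 ≤ w i) (ha : ∀ i, 0 ≤ a i) (hb : ∀ i, 0 ≤ b i)
    (hab : ∀ i, b i = 0 → a i = 0) :
    ∑ i ∈ s, w i * a i * b i ^ (p - 1) ≤
      (∑ i ∈ s, w i * a i ^ p) ^ p⁻¹ * (∑ i ∈ s, w i * b i ^ p) ^ (1 - p⁻¹) := by
  have hp0 : p ≠ 0 := by positivity
  -- weighted Hölder for `a / b` with the weights `w * b ^ p`
  have key := Real.inner_le_weight_mul_Lp_of_nonneg s hp (fun i => w i * b i ^ p)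
    (fun i => a i / b i) (fun i => mul_nonneg (hw i) (Real.rpow_nonneg (hb i) p))
    (fun i => div_nonneg (ha i) (hb i))
  have hlin : ∀ i, w i * b i ^ p * (a i / b i) = w i * a i * b i ^ (p - 1) := fun i => by
    rcases (hb i).eq_or_lt with hbi | hbi
    · simp [← hbi, hab i hbi.symm]
    · rw [Real.rpow_sub_one hbi.ne']
      field_simp
  have hpow : ∀ i, w i * b i ^ p * (a i / b i) ^ p = w i * a i ^ p := fun i => by
    rcases (hb i).eq_or_lt with hbi | hbi
    · simp [← hbi, hab i hbi.symm, hp0]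
    · rw [Real.div_rpow (ha i) (hb i)]
      field_simp [(Real.rpow_pos_of_pos hbi p).ne']
  simp only [hlin, hpow] at key
  rwa [mul_comm]

theorem rpow_inv_le_of_mul_le_mul_rpow_one_sub {p h K X : ℝ} (hp : 1 ≤ p) (hh : 0 < h)
    (hK : 0 ≤ K) (hX : 0 ≤ X) (H : h * X ≤ K * X ^ (1 - p⁻¹)) : X ^ p⁻¹ ≤ K / h := by
  rcases hX.eq_or_lt with rfl | hX
  · rw [Real.zero_rpow (by positivity)]
    positivity
  rw [le_div_iff₀ hh]
  refine le_of_mul_le_mul_right ?_ (Real.rpow_pos_of_pos hX (1 - p⁻¹))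
  calc X ^ p⁻¹ * h * X ^ (1 - p⁻¹) = h * X := by
        rw [mul_right_comm, ← Real.rpow_add hX, add_sub_cancel, Real.rpow_one, mul_comm]
    _ ≤ K * X ^ (1 - p⁻¹) := H

section WeightedGraph

variable {V : Type*} {ν : V → ℝ} {μ : V → V → ℝ}

theorem sum_sum_mul_abs_ite_sub_ite (hsymm : ∀ x y, μ x y = μ y x) {S T : Finset V}
    (hST : S ⊆ T) {m : ℝ} (hm : 0 ≤ m) :
    ∑ x ∈ T, ∑ y ∈ T, μ x y * |(if x ∈ S then m else 0) - (if y ∈ S then m else 0)| =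
      2 * m * ∑ x ∈ S, ∑ y ∈ T \ S, μ x y := by
  set F : V → V → ℝ := fun x y => μ x y * |(if x ∈ S then m else 0) - (if y ∈ S then m else 0)|
  have hF : ∀ x y, F x y = if (x ∈ S ↔ y ∈ S) then 0 else m * μ x y := by
    intro x y
    by_cases hx : x ∈ S <;> by_cases hy : y ∈ S <;> simp [F, hx, hy, abs_of_nonneg hm, mul_comm]
  have hcross : ∑ x ∈ S, ∑ y ∈ T \ S, F x y = m * ∑ x ∈ S, ∑ y ∈ T \ S, μ x y := by
    simp only [mul_sum]
    refine sum_congr rfl fun x hx => sum_congr rfl fun y hy => ?_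
    simp [hF, hx, (mem_sdiff.1 hy).2]
  have hdiag : ∀ A : Finset V, (∀ x ∈ A, ∀ y ∈ A, (x ∈ S ↔ y ∈ S)) →
      ∑ x ∈ A, ∑ y ∈ A, F x y = 0 := fun A hA =>
    sum_eq_zero fun x hx => sum_eq_zero fun y hy => by simp [hF, hA x hx y hy]
  calc ∑ x ∈ T, ∑ y ∈ T, F x y
      = ∑ x ∈ T \ S, ∑ y ∈ T \ S, F x y + ∑ x ∈ T \ S, ∑ y ∈ S, F x y +
          (∑ x ∈ S, ∑ y ∈ T \ S, F x y + ∑ x ∈ S, ∑ y ∈ S, F x y) := by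
        simp only [← sum_sdiff hST, sum_add_distrib]
    _ = ∑ x ∈ S, ∑ y ∈ T \ S, F x y + ∑ x ∈ S, ∑ y ∈ T \ S, F x y := by
        rw [hdiag S (by simp_all), hdiag (T \ S) (by simp_all), sum_comm]
        simp only [hF, hsymm, Iff.comm]
        ring
    _ = 2 * m * ∑ x ∈ S, ∑ y ∈ T \ S, μ x y := by
        rw [hcross]
        ring

theorem l1_sobolev_finset_of_cheeger (hsymm : ∀ x y, μ x y = μ y x) {h : ℝ} {S T : Finset V}
    (hST : S ⊆ T)
    (hcheeger : ∀ Ω ⊆ S, Ω.Nonempty → h * ∑ x ∈ Ω, ν x ≤ ∑ x ∈ Ω, ∑ y ∈ T \ Ω, μ x y)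
    {g : V → ℝ} (hg : ∀ x, 0 ≤ g x) (hzero : ∀ x ∉ S, g x = 0) :
    h * ∑ x ∈ T, g x * ν x ≤ 1 / 2 * ∑ x ∈ T, ∑ y ∈ T, μ x y * |g x - g y| := by
  induction S using Finset.strongInduction generalizing g with
  | H S ih =>
  rcases S.eq_empty_or_nonempty with rfl | hS
  · have hg0 : ∀ x, g x = 0 := fun x => hzero x (notMem_empty x)
    simp [hg0]
  obtain ⟨x₀, hx₀, hmin⟩ := S.exists_min_image g hS
  set m := g x₀
  have hm : 0 ≤ m := hg x₀
  set g' : V → ℝ := fun x => max (g x - m) 0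
  have hlow : ∀ x, min (g x) m = if x ∈ S then m else 0 := fun x => by
    by_cases hx : x ∈ S
    · simp [hx, hmin x hx]
    · simp [hx, hzero x hx, hm]
  have hmass : ∑ x ∈ T, g x * ν x = m * ∑ x ∈ S, ν x + ∑ x ∈ T, g' x * ν x := by
    have hsplit : ∀ x, g x * ν x = (if x ∈ S then m * ν x else 0) + g' x * ν x := fun x => by
      rw [← zero_mul (ν x), ← ite_mul, ← hlow, ← add_mul]
      congr 1
      simp only [g']
      grind
    rw [sum_congr rfl fun x _ => hsplit x, sum_add_distrib, sum_ite_mem, inter_eq_right.2 hST,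
      mul_sum]
  have henergy : ∑ x ∈ T, ∑ y ∈ T, μ x y * |g x - g y| =
      2 * m * ∑ x ∈ S, ∑ y ∈ T \ S, μ x y + ∑ x ∈ T, ∑ y ∈ T, μ x y * |g' x - g' y| := by
    simp only [abs_sub_eq_abs_min_sub_add_abs_max_sub (g _) (g _) m, hlow, mul_add,
      sum_add_distrib, sum_sum_mul_abs_ite_sub_ite hsymm hST hm]
    rfl
  have hS' : S.filter (fun x => m < g x) ⊂ S := filter_ssubset.2 ⟨x₀, hx₀, lt_irrefl m⟩
  have hg' := ih _ hS' ((filter_subset _ S).trans hST)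
    (fun Ω hΩ => hcheeger Ω (hΩ.trans (filter_subset _ S)))
    (g := g') (fun x => le_max_right _ _) fun x hx => by
      have hgx : g x ≤ m := by
        by_cases hxS : x ∈ S
        · simpa [hxS] using hx
        · exact (hzero x hxS).trans_le hm
      exact max_eq_right (by linarith)
  have hbdry := mul_le_mul_of_nonneg_left (hcheeger S subset_rfl hS) hm
  rw [hmass, henergy]
  linarith

theorem sum_sum_mul_add_le (hsymm : ∀ x y, μ x y = μ y x) {T : Finset V} {M : ℝ}
    (hdeg : ∀ x ∈ T, ∑ y ∈ T, μ x y ≤ M * ν x) {φ : V → ℝ} (hφ : ∀ x, 0 ≤ φ x) :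
    ∑ x ∈ T, ∑ y ∈ T, μ x y * (φ x + φ y) ≤ 2 * M * ∑ x ∈ T, φ x * ν x := by
  have hswap : ∑ x ∈ T, ∑ y ∈ T, μ x y * φ y = ∑ x ∈ T, ∑ y ∈ T, μ x y * φ x := by
    rw [sum_comm]
    exact sum_congr rfl fun x _ => sum_congr rfl fun y _ => by rw [hsymm]
  calc ∑ x ∈ T, ∑ y ∈ T, μ x y * (φ x + φ y) = 2 * ∑ x ∈ T, φ x * ∑ y ∈ T, μ x y := by
        simp only [mul_add, sum_add_distrib, hswap, mul_sum, ← two_mul]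
        exact sum_congr rfl fun x _ => sum_congr rfl fun y _ => by ring
    _ ≤ 2 * ∑ x ∈ T, φ x * (M * ν x) := by
        gcongr with x hx
        · exact hφ x
        · exact hdeg x hx
    _ = 2 * M * ∑ x ∈ T, φ x * ν x := by
        simp only [mul_sum]
        exact sum_congr rfl fun x _ => by ring

theorem mul_sum_rpow_le_of_cheeger (hsymm : ∀ x y, μ x y = μ y x) (hnn : ∀ x y, 0 ≤ μ x y)
    {h p : ℝ} (hp : 1 ≤ p) {S T : Finset V} (hST : S ⊆ T)
    (hcheeger : ∀ Ω ⊆ S, Ω.Nonempty → h * ∑ x ∈ Ω, ν x ≤ ∑ x ∈ Ω, ∑ y ∈ T \ Ω, μ x y)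
    {f : V → ℝ} (hf : ∀ x ∉ S, f x = 0) :
    h * ∑ x ∈ T, |f x| ^ p * ν x ≤
      p / 2 * (∑ x ∈ T, ∑ y ∈ T, μ x y * |f x - f y| ^ p) ^ p⁻¹ *
        (∑ x ∈ T, ∑ y ∈ T, μ x y * (|f x| + |f y|) ^ p) ^ (1 - p⁻¹) := by
  have hp0 : 0 < p := by linarith
  have hpointwise : ∀ x y, μ x y * |(|f x| ^ p - |f y| ^ p)| ≤
      p * (μ x y * |f x - f y| * (|f x| + |f y|) ^ (p - 1)) := fun x y =>
    (mul_le_mul_of_nonneg_left (abs_abs_rpow_sub_abs_rpow_le hp _ _) (hnn x y)).trans_eq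
      (by ring)
  have hholder : ∑ x ∈ T, ∑ y ∈ T, μ x y * |f x - f y| * (|f x| + |f y|) ^ (p - 1) ≤
      (∑ x ∈ T, ∑ y ∈ T, μ x y * |f x - f y| ^ p) ^ p⁻¹ *
        (∑ x ∈ T, ∑ y ∈ T, μ x y * (|f x| + |f y|) ^ p) ^ (1 - p⁻¹) := by
    simp only [← sum_product']
    exact sum_mul_mul_rpow_sub_one_le _ hp (fun z => hnn z.1 z.2) (fun _ => abs_nonneg _)
      (fun _ => by positivity) fun z hz => le_antisymm ((abs_sub _ _).trans hz.le) (abs_nonneg _)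
  calc h * ∑ x ∈ T, |f x| ^ p * ν x
      ≤ 1 / 2 * ∑ x ∈ T, ∑ y ∈ T, μ x y * |(|f x| ^ p - |f y| ^ p)| :=
        l1_sobolev_finset_of_cheeger hsymm hST hcheeger (fun x => by positivity)
          fun x hx => by simp [hf x hx, hp0.ne']
    _ ≤ 1 / 2 * (p * ∑ x ∈ T, ∑ y ∈ T, μ x y * |f x - f y| * (|f x| + |f y|) ^ (p - 1)) := by
        refine mul_le_mul_of_nonneg_left ?_ (by norm_num)
        simp only [mul_sum]
        exact sum_le_sum fun x _ => sum_le_sum fun y _ => hpointwise x y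
    _ ≤ 1 / 2 * (p * ((∑ x ∈ T, ∑ y ∈ T, μ x y * |f x - f y| ^ p) ^ p⁻¹ *
          (∑ x ∈ T, ∑ y ∈ T, μ x y * (|f x| + |f y|) ^ p) ^ (1 - p⁻¹))) :=
        mul_le_mul_of_nonneg_left (mul_le_mul_of_nonneg_left hholder hp0.le) (by norm_num)
    _ = _ := by ring

theorem sum_sum_mul_abs_add_abs_rpow_le (hsymm : ∀ x y, μ x y = μ y x) (hnn : ∀ x y, 0 ≤ μ x y)
    {M p : ℝ} (hp : 1 ≤ p) {T : Finset V} (hdeg : ∀ x ∈ T, ∑ y ∈ T, μ x y ≤ M * ν x)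
    (f : V → ℝ) :
    ∑ x ∈ T, ∑ y ∈ T, μ x y * (|f x| + |f y|) ^ p ≤ 2 ^ p * M * ∑ x ∈ T, |f x| ^ p * ν x := by
  calc ∑ x ∈ T, ∑ y ∈ T, μ x y * (|f x| + |f y|) ^ p
      ≤ ∑ x ∈ T, ∑ y ∈ T, μ x y * (2 ^ (p - 1) * (|f x| ^ p + |f y| ^ p)) :=
        sum_le_sum fun x _ => sum_le_sum fun y _ => mul_le_mul_of_nonneg_left
          (add_rpow_le_two_rpow_sub_one_mul hp (abs_nonneg _) (abs_nonneg _)) (hnn x y)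
    _ = 2 ^ (p - 1) * ∑ x ∈ T, ∑ y ∈ T, μ x y * (|f x| ^ p + |f y| ^ p) := by
        simp only [mul_sum]
        exact sum_congr rfl fun x _ => sum_congr rfl fun y _ => by ring
    _ ≤ 2 ^ (p - 1) * (2 * M * ∑ x ∈ T, |f x| ^ p * ν x) :=
        mul_le_mul_of_nonneg_left (sum_sum_mul_add_le hsymm hdeg fun x => by positivity)
          (by positivity)
    _ = 2 ^ p * M * ∑ x ∈ T, |f x| ^ p * ν x := by
        rw [Real.rpow_sub_one two_ne_zero]
        ring

theorem lp_sobolev_finset_of_cheeger (hν : ∀ x, 0 ≤ ν x) (hsymm : ∀ x y, μ x y = μ y x)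
    (hnn : ∀ x y, 0 ≤ μ x y) {h M p : ℝ} (hh : 0 < h) (hM : 0 ≤ M) (hp : 1 ≤ p)
    {S T : Finset V} (hST : S ⊆ T)
    (hcheeger : ∀ Ω ⊆ S, Ω.Nonempty → h * ∑ x ∈ Ω, ν x ≤ ∑ x ∈ Ω, ∑ y ∈ T \ Ω, μ x y)
    (hdeg : ∀ x ∈ T, ∑ y ∈ T, μ x y ≤ M * ν x) {f : V → ℝ} (hf : ∀ x ∉ S, f x = 0) :
    (∑ x ∈ T, |f x| ^ p * ν x) ^ p⁻¹ ≤
      p * (2 ^ p * M) ^ (1 - p⁻¹) / (2 * h) * 2 ^ p⁻¹ *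
        (1 / 2 * ∑ x ∈ T, ∑ y ∈ T, μ x y * |f x - f y| ^ p) ^ p⁻¹ := by
  set X := ∑ x ∈ T, |f x| ^ p * ν x
  set Y := ∑ x ∈ T, ∑ y ∈ T, μ x y * |f x - f y| ^ p
  have hX : 0 ≤ X := sum_nonneg fun x _ => by have := hν x; positivity
  have hY : 0 ≤ Y := sum_nonneg fun x _ => sum_nonneg fun y _ => by have := hnn x y; positivity
  have hZ : 0 ≤ ∑ x ∈ T, ∑ y ∈ T, μ x y * (|f x| + |f y|) ^ p :=
    sum_nonneg fun x _ => sum_nonneg fun y _ => by have := hnn x y; positivity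
  have hexp : 0 ≤ 1 - p⁻¹ := sub_nonneg.2 (inv_le_one_of_one_le₀ hp)
  have hmain : h * X ≤ p / 2 * (2 ^ p * M) ^ (1 - p⁻¹) * Y ^ p⁻¹ * X ^ (1 - p⁻¹) :=
    calc h * X ≤ p / 2 * Y ^ p⁻¹ * (2 ^ p * M * X) ^ (1 - p⁻¹) :=
          (mul_sum_rpow_le_of_cheeger hsymm hnn hp hST hcheeger hf).trans <| by
            gcongr
            exact sum_sum_mul_abs_add_abs_rpow_le hsymm hnn hp hdeg f
      _ = p / 2 * (2 ^ p * M) ^ (1 - p⁻¹) * Y ^ p⁻¹ * X ^ (1 - p⁻¹) := by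
          rw [Real.mul_rpow (by positivity) hX]
          ring
  calc X ^ p⁻¹ ≤ p / 2 * (2 ^ p * M) ^ (1 - p⁻¹) * Y ^ p⁻¹ / h :=
        rpow_inv_le_of_mul_le_mul_rpow_one_sub hp hh (by positivity) hX hmain
    _ = p * (2 ^ p * M) ^ (1 - p⁻¹) / (2 * h) * 2 ^ p⁻¹ * (1 / 2 * Y) ^ p⁻¹ := by
        rw [mul_assoc _ (2 ^ p⁻¹), ← Real.mul_rpow (by norm_num) (by positivity)]
        field_simp

theorem exists_superset_containing_incident_edges (hsymm : ∀ x y, μ x y = μ y x)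
    (hloc : ∀ x, (Function.support (μ x)).Finite) (S : Finset V) :
    ∃ T : Finset V, S ⊆ T ∧ ∀ x y, μ x y ≠ 0 → x ∈ S ∨ y ∈ S → x ∈ T ∧ y ∈ T := by
  refine ⟨S ∪ S.biUnion fun x => (hloc x).toFinset, subset_union_left, fun x y hxy hS => ?_⟩
  have hnbr : ∀ x ∈ S, ∀ y, μ x y ≠ 0 → y ∈ S ∪ S.biUnion fun x => (hloc x).toFinset :=
    fun x hx y hxy => mem_union_right _ (mem_biUnion.2 ⟨x, hx, (hloc x).mem_toFinset.2 hxy⟩)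
  rcases hS with hx | hy
  · exact ⟨mem_union_left _ hx, hnbr x hx y hxy⟩
  · exact ⟨hnbr y hy x (by rwa [hsymm]), mem_union_left _ hy⟩

theorem tsum_tsum_eq_sum_sum {M : Type*} [AddCommMonoid M] [TopologicalSpace M]
    {w : V → V → M} {T : Finset V} (hw : ∀ x y, w x y ≠ 0 → x ∈ T ∧ y ∈ T) :
    ∑' x, ∑' y, w x y = ∑ x ∈ T, ∑ y ∈ T, w x y :=
  calc ∑' x, ∑' y, w x y = ∑' x, ∑ y ∈ T, w x y :=
        tsum_congr fun x => tsum_eq_sum fun y hy => not_not.1 fun h => hy (hw x y h).2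
    _ = ∑ x ∈ T, ∑ y ∈ T, w x y :=
        tsum_eq_sum fun x hx => sum_eq_zero fun y _ => not_not.1 fun h => hx (hw x y h).1

theorem tsum_ite_mem_eq_sum_sdiff {M : Type*} [AddCommMonoid M] [TopologicalSpace M]
    {w : V → M} {Ω T : Finset V} (hw : ∀ y, w y ≠ 0 → y ∈ T) :
    ∑' y, (if y ∈ Ω then 0 else w y) = ∑ y ∈ T \ Ω, w y := by
  rw [tsum_eq_sum (s := T \ Ω) fun y hy => ?_]
  · exact sum_congr rfl fun y hy => if_neg (mem_sdiff.1 hy).2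
  split_ifs with hyΩ
  · rfl
  exact not_not.1 fun hwy => hy (mem_sdiff.2 ⟨hw y hwy, hyΩ⟩)

end WeightedGraph

theorem lp_poincare_of_cheeger_general {V : Type*} (ν : V → ℝ) (μ : V → V → ℝ)
    (hν : ∀ x, 0 < ν x) (hsymm : ∀ x y, μ x y = μ y x) (hnn : ∀ x y, 0 ≤ μ x y)
    (hloc : ∀ x, (Function.support (μ x)).Finite)
    (hM : ∃ M : ℝ, ∀ x, (∑' y, μ x y) / ν x ≤ M)
    (h : ℝ) (hh : 0 < h)
    (hcheeger : ∀ Ω : Finset V, Ω.Nonempty →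
      h * ∑ x ∈ Ω, ν x ≤ ∑ x ∈ Ω, ∑' y, (if y ∈ Ω then 0 else μ x y))
    (p : ℝ) (hp : 1 ≤ p) :
    ∃ C : ℝ, 0 < C ∧ ∀ f : V → ℝ, (Function.support f).Finite →
      (∑' x, |f x| ^ p * ν x) ^ (1 / p)
        ≤ C * ((1 / 2) * ∑' x, ∑' y, μ x y * |f x - f y| ^ p) ^ (1 / p) := by
  obtain ⟨M₀, hM₀⟩ := hM
  set M := max M₀ 1
  have hp0 : p ≠ 0 := by positivity
  refine ⟨p * (2 ^ p * M) ^ (1 - p⁻¹) / (2 * h) * 2 ^ p⁻¹, by positivity, fun f hf => ?_⟩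
  set S := hf.toFinset
  have hfS : ∀ x ∉ S, f x = 0 := by simp [S]
  obtain ⟨T, hST, hT⟩ := exists_superset_containing_incident_edges hsymm hloc S
  have hdeg : ∀ x ∈ T, ∑ y ∈ T, μ x y ≤ M * ν x := fun x _ =>
    (Summable.sum_le_tsum T (fun y _ => hnn x y) (summable_of_hasFiniteSupport (hloc x))).trans
      (((div_le_iff₀ (hν x)).1 (hM₀ x)).trans
        (mul_le_mul_of_nonneg_right (le_max_left M₀ 1) (hν x).le))
  have hcheegerT : ∀ Ω ⊆ S, Ω.Nonempty → h * ∑ x ∈ Ω, ν x ≤ ∑ x ∈ Ω, ∑ y ∈ T \ Ω, μ x y :=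
    fun Ω hΩ hne => (hcheeger Ω hne).trans_eq <| sum_congr rfl fun x hx =>
      tsum_ite_mem_eq_sum_sdiff fun y hxy => (hT x y hxy (Or.inl (hΩ hx))).2
  have hX : ∑' x, |f x| ^ p * ν x = ∑ x ∈ T, |f x| ^ p * ν x :=
    tsum_eq_sum fun x hx => by simp [hfS x fun hxS => hx (hST hxS), hp0]
  have hY : ∑' x, ∑' y, μ x y * |f x - f y| ^ p = ∑ x ∈ T, ∑ y ∈ T, μ x y * |f x - f y| ^ p :=
    tsum_tsum_eq_sum_sum fun x y hxy => hT x y (left_ne_zero_of_mul hxy) <| by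
      by_contra! hxy'
      simp [hfS x hxy'.1, hfS y hxy'.2, hp0] at hxy
  rw [hX, hY, one_div]
  exact lp_sobolev_finset_of_cheeger (fun x => (hν x).le) hsymm hnn hh (by positivity) hp hST
    hcheegerT hdeg hfS

theorem lp_poincare_of_cheeger {V : Type*} (ν : V → ℝ) (μ : V → V → ℝ)
    (hν : ∀ x, 0 < ν x) (hsymm : ∀ x y, μ x y = μ y x) (hnn : ∀ x y, 0 ≤ μ x y)
    (hloc : ∀ x, (Function.support (μ x)).Finite)
    (hconn : ∀ x y : V, Relation.ReflTransGen (fun a b => 0 < μ a b) x y)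
    (hM : ∃ M : ℝ, ∀ x, (∑' y, μ x y) / ν x ≤ M)
    (h : ℝ) (hh : 0 < h)
    (hcheeger : ∀ Ω : Finset V, Ω.Nonempty →
      h * ∑ x ∈ Ω, ν x ≤ ∑ x ∈ Ω, ∑' y, (if y ∈ Ω then 0 else μ x y))
    (p : ℝ) (hp : 1 ≤ p) :
    ∃ C : ℝ, 0 < C ∧ ∀ f : V → ℝ, (Function.support f).Finite →
      (∑' x, |f x| ^ p * ν x) ^ (1 / p)
        ≤ C * ((1 / 2) * ∑' x, ∑' y, μ x y * |f x - f y| ^ p) ^ (1 / p) :=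
  lp_poincare_of_cheeger_general ν μ hν hsymm hnn hloc hM h hh hcheeger p hp
end

section
/- Let G = (V,E,ν,μ) be a connected locally finite weighted graph with sup_x deg_x/ν_x < ∞ and positive ℓ² spectral gap (i.e. ‖f‖_{ℓ²(V,ν)} ≤ C‖|Df|‖_{ℓ²(E,μ)} for all finitely supported f). Then for every p ∈ [1,∞) the norms ‖|Df|‖_{ℓ^p(E,μ)} and ‖f‖_{ℓ^p(V,ν)} are equivalent on finitely supported functions: there exist constants c, C > 0 with c‖f‖_{ℓ^p(V,ν)} ≤ ‖|Df|‖_{ℓ^p(E,μ)} ≤ C‖f‖_{ℓ^p(V,ν)}. -/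
/-!
The upper bound is pointwise, `|f x - f y|^p ≤ 2^p (|f x|^p + |f y|^p)`, summed against the
bounded degree. For the lower bound, apply the spectral gap to `g = |f|^(p/2)`, whose `ℓ²` norm
squared is `∑ |f|^p ν`. For `p ≤ 2`, `t ↦ t^(p/2)` is `(p/2)`-Hölder, so the Dirichlet energy of
`g` is at most `∑ μ |f x - f y|^p`. For `p > 2`, the mean value bound
`|g x - g y| ≤ (p/2) max(|f x|, |f y|)^(p/2-1) |f x - f y|` and Hölder's inequality with
exponents `p/(p-2)` and `p/2` give `‖f‖ₚ^p ≤ K ‖f‖ₚ^(p-2) ‖Df‖ₚ^2`. Every sum is finite, since `f`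
is finitely supported and the graph is locally finite.
-/

open Finset Real

lemma abs_sub_rpow_le_two_rpow_mul {a b p : ℝ} (hp : 0 ≤ p) :
    |a - b| ^ p ≤ 2 ^ p * (|a| ^ p + |b| ^ p) := by
  wlog hab : |a| ≤ |b| generalizing a b
  · rw [abs_sub_comm, add_comm]; exact this (le_of_not_ge hab)
  calc |a - b| ^ p ≤ (2 * |b|) ^ p := by gcongr; linarith [abs_sub a b]
    _ = 2 ^ p * |b| ^ p := mul_rpow zero_le_two (abs_nonneg b)
    _ ≤ 2 ^ p * (|a| ^ p + |b| ^ p) := by gcongr; exact le_add_of_nonneg_left (by positivity)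

lemma abs_rpow_sub_rpow_le {u v r : ℝ} (hu : 0 ≤ u) (hv : 0 ≤ v) (hr₀ : 0 ≤ r) (hr₁ : r ≤ 1) :
    |u ^ r - v ^ r| ≤ |u - v| ^ r := by
  wlog hvu : v ≤ u generalizing u v
  · rw [abs_sub_comm, abs_sub_comm u]; exact this hv hu (le_of_not_ge hvu)
  have h := rpow_add_le_add_rpow (sub_nonneg.2 hvu) hv hr₀ hr₁
  rw [sub_add_cancel] at h
  rw [abs_of_nonneg (sub_nonneg.2 (rpow_le_rpow hv hvu hr₀)), abs_of_nonneg (sub_nonneg.2 hvu)]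
  linarith

lemma rpow_sub_rpow_le_mul_rpow_mul_sub {u v r : ℝ} (hv : 0 ≤ v) (hvu : v ≤ u) (hr : 1 ≤ r) :
    u ^ r - v ^ r ≤ r * u ^ (r - 1) * (u - v) := by
  obtain rfl | hu := (hv.trans hvu).eq_or_lt
  · obtain rfl : v = 0 := le_antisymm hvu hv
    simp
  -- Bernoulli's inequality at `v / u - 1`
  have h := one_add_mul_self_le_rpow_one_add (s := v / u - 1)
    (by linarith [div_nonneg hv hu.le]) hr
  rw [add_sub_cancel, div_rpow hv hu.le, le_div_iff₀ (rpow_pos_of_pos hu r)] at h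
  have hur : u ^ r = u ^ (r - 1) * u := by rw [← rpow_add_one hu.ne']; ring_nf
  have : (1 + r * (v / u - 1)) * u ^ r = u ^ r - r * u ^ (r - 1) * (u - v) := by
    rw [hur]; field_simp; ring
  linarith

lemma sq_rpow_sub_rpow_le {u v r : ℝ} (hu : 0 ≤ u) (hv : 0 ≤ v) (hr : 1 ≤ r) :
    (u ^ r - v ^ r) ^ 2 ≤ r ^ 2 * (u ^ (2 * r - 2) + v ^ (2 * r - 2)) * (u - v) ^ 2 := by
  wlog hvu : v ≤ u generalizing u v
  · convert this hv hu (le_of_not_ge hvu) using 1 <;> ring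
  have hsq : (u ^ (r - 1)) ^ 2 = u ^ (2 * r - 2) := by
    rw [← rpow_natCast, ← rpow_mul hu]; push_cast; ring_nf
  calc (u ^ r - v ^ r) ^ 2 ≤ (r * u ^ (r - 1) * (u - v)) ^ 2 :=
        pow_le_pow_left₀ (sub_nonneg.2 (rpow_le_rpow hv hvu (by linarith)))
          (rpow_sub_rpow_le_mul_rpow_mul_sub hv hvu hr) 2
    _ = r ^ 2 * u ^ (2 * r - 2) * (u - v) ^ 2 := by rw [← hsq]; ring
    _ ≤ _ := by gcongr; exact le_add_of_nonneg_right (rpow_nonneg hv _)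

lemma inner_le_weight_mul_Lp_mul_Lq_of_nonneg {ι : Type*} (s : Finset ι) {P Q : ℝ}
    (hPQ : P.HolderConjugate Q) {w a b : ι → ℝ} (hw : ∀ i ∈ s, 0 ≤ w i)
    (ha : ∀ i ∈ s, 0 ≤ a i) (hb : ∀ i ∈ s, 0 ≤ b i) :
    ∑ i ∈ s, w i * a i * b i ≤
      (∑ i ∈ s, w i * a i ^ P) ^ (1 / P) * (∑ i ∈ s, w i * b i ^ Q) ^ (1 / Q) := by
  have root_mul_rpow {i} (hi : i ∈ s) {R c : ℝ} (hR : R ≠ 0) (hc : 0 ≤ c) :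
      (w i ^ (1 / R) * c) ^ R = w i * c ^ R := by
    rw [mul_rpow (rpow_nonneg (hw i hi) _) hc, ← rpow_mul (hw i hi), one_div_mul_cancel hR,
      rpow_one]
  calc ∑ i ∈ s, w i * a i * b i
      = ∑ i ∈ s, (w i ^ (1 / P) * a i) * (w i ^ (1 / Q) * b i) := by
        refine sum_congr rfl fun i hi => ?_
        rw [mul_mul_mul_comm, ← rpow_add' (hw i hi) (by rw [hPQ.one_div_add_one_div]; norm_num),
          hPQ.one_div_add_one_div, div_one, rpow_one]
        ring
    _ ≤ (∑ i ∈ s, (w i ^ (1 / P) * a i) ^ P) ^ (1 / P)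
          * (∑ i ∈ s, (w i ^ (1 / Q) * b i) ^ Q) ^ (1 / Q) :=
        inner_le_Lp_mul_Lq_of_nonneg s hPQ
          (fun i hi => mul_nonneg (rpow_nonneg (hw i hi) _) (ha i hi))
          (fun i hi => mul_nonneg (rpow_nonneg (hw i hi) _) (hb i hi))
    _ = _ := by
        rw [sum_congr rfl fun i hi => root_mul_rpow hi hPQ.ne_zero (ha i hi),
          sum_congr rfl fun i hi => root_mul_rpow hi hPQ.symm.ne_zero (hb i hi)]

lemma le_rpow_inv_mul_of_le_mul_rpow_mul_rpow {a b K θ : ℝ} (ha : 0 ≤ a) (hb : 0 ≤ b)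
    (hK : 0 ≤ K) (hθ : 0 < θ) (h : a ≤ K * a ^ (1 - θ) * b ^ θ) : a ≤ K ^ θ⁻¹ * b := by
  obtain rfl | ha := ha.eq_or_lt
  · positivity
  have hθ' : a ^ θ ≤ K * b ^ θ := by
    refine le_of_mul_le_mul_left ?_ (rpow_pos_of_pos ha (1 - θ))
    rw [← rpow_add ha, sub_add_cancel, rpow_one]
    linarith
  calc a = (a ^ θ) ^ θ⁻¹ := (rpow_rpow_inv ha.le hθ.ne').symm
    _ ≤ (K * b ^ θ) ^ θ⁻¹ := rpow_le_rpow (by positivity) hθ' (by positivity)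
    _ = K ^ θ⁻¹ * b := by rw [mul_rpow hK (by positivity), rpow_rpow_inv hb hθ.ne']

lemma rpow_le_mul_rpow_of_le_mul {a b k q : ℝ} (ha : 0 ≤ a) (hk : 0 < k) (hq : 0 ≤ q)
    (h : a ≤ k * b) : a ^ q ≤ k ^ q * b ^ q := by
  rw [← mul_rpow hk.le (nonneg_of_mul_nonneg_right (ha.trans h) hk)]
  exact rpow_le_rpow ha h hq

section FiniteSums

variable {V : Type*} {ν : V → ℝ} {μ : V → V → ℝ} (N : Finset V)

lemma sum_sum_mul_swap (hsymm : ∀ x y, μ x y = μ y x) (F : V → V → ℝ) :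
    ∑ x ∈ N, ∑ y ∈ N, μ x y * F y x = ∑ x ∈ N, ∑ y ∈ N, μ x y * F x y := by
  rw [sum_comm]
  exact sum_congr rfl fun x _ => sum_congr rfl fun y _ => by rw [hsymm]

lemma sum_sum_mul_le_of_sum_le {M : ℝ} (hdeg : ∀ x, ∑ y ∈ N, μ x y ≤ M * ν x) {h : V → ℝ}
    (hh : ∀ x, 0 ≤ h x) :
    ∑ x ∈ N, ∑ y ∈ N, μ x y * h x ≤ M * ∑ x ∈ N, h x * ν x := by
  rw [mul_sum]
  refine sum_le_sum fun x _ => ?_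
  rw [← sum_mul]
  calc (∑ y ∈ N, μ x y) * h x ≤ M * ν x * h x := mul_le_mul_of_nonneg_right (hdeg x) (hh x)
    _ = M * (h x * ν x) := by ring

lemma half_sum_sum_abs_sub_rpow_le (hsymm : ∀ x y, μ x y = μ y x) (hnn : ∀ x y, 0 ≤ μ x y)
    {M : ℝ} (hdeg : ∀ x, ∑ y ∈ N, μ x y ≤ M * ν x) {p : ℝ} (hp : 0 ≤ p) (f : V → ℝ) :
    1 / 2 * ∑ x ∈ N, ∑ y ∈ N, μ x y * |f x - f y| ^ p
      ≤ 2 ^ p * M * ∑ x ∈ N, |f x| ^ p * ν x := by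
  have hpt (x y : V) : μ x y * |f x - f y| ^ p
      ≤ 2 ^ p * (μ x y * |f x| ^ p) + 2 ^ p * (μ x y * |f y| ^ p) := by
    have := mul_le_mul_of_nonneg_left (abs_sub_rpow_le_two_rpow_mul (a := f x) (b := f y) hp)
      (hnn x y)
    linarith
  have hswap := sum_sum_mul_swap N hsymm fun x _ => |f x| ^ p
  calc 1 / 2 * ∑ x ∈ N, ∑ y ∈ N, μ x y * |f x - f y| ^ p
      ≤ 1 / 2 * ∑ x ∈ N, ∑ y ∈ N,
          (2 ^ p * (μ x y * |f x| ^ p) + 2 ^ p * (μ x y * |f y| ^ p)) := by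
        gcongr with x _ y _; exact hpt x y
    _ = 2 ^ p * ∑ x ∈ N, ∑ y ∈ N, μ x y * |f x| ^ p := by
        simp only [sum_add_distrib, ← mul_sum, hswap]; ring
    _ ≤ 2 ^ p * (M * ∑ x ∈ N, |f x| ^ p * ν x) := by
        gcongr; exact sum_sum_mul_le_of_sum_le N hdeg fun x => by positivity
    _ = 2 ^ p * M * ∑ x ∈ N, |f x| ^ p * ν x := by ring

lemma sum_sum_sq_rpow_sub_le_of_le_two (hnn : ∀ x y, 0 ≤ μ x y) {p : ℝ} (hp₀ : 0 ≤ p)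
    (hp₂ : p ≤ 2) (f : V → ℝ) :
    ∑ x ∈ N, ∑ y ∈ N, μ x y * (|f x| ^ (p / 2) - |f y| ^ (p / 2)) ^ 2
      ≤ ∑ x ∈ N, ∑ y ∈ N, μ x y * |f x - f y| ^ p := by
  refine sum_le_sum fun x _ => sum_le_sum fun y _ => mul_le_mul_of_nonneg_left ?_ (hnn x y)
  calc (|f x| ^ (p / 2) - |f y| ^ (p / 2)) ^ 2
      = |(|f x| ^ (p / 2) - |f y| ^ (p / 2))| ^ 2 := (sq_abs _).symm
    _ ≤ (|(|f x| - |f y|)| ^ (p / 2)) ^ 2 := by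
        gcongr
        exact abs_rpow_sub_rpow_le (abs_nonneg _) (abs_nonneg _) (by positivity) (by linarith)
    _ ≤ (|f x - f y| ^ (p / 2)) ^ 2 := by
        gcongr (?_ ^ _) ^ _; exact abs_abs_sub_abs_le_abs_sub (f x) (f y)
    _ = |f x - f y| ^ p := by rw [← rpow_natCast, ← rpow_mul (abs_nonneg _)]; norm_num

lemma sum_sum_sq_rpow_sub_le_of_two_lt (hsymm : ∀ x y, μ x y = μ y x)
    (hnn : ∀ x y, 0 ≤ μ x y) {p : ℝ} (hp : 2 < p) (f : V → ℝ) :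
    ∑ x ∈ N, ∑ y ∈ N, μ x y * (|f x| ^ (p / 2) - |f y| ^ (p / 2)) ^ 2
      ≤ p ^ 2 / 2 * (∑ x ∈ N, ∑ y ∈ N, μ x y * |f x| ^ p) ^ (1 - 2 / p)
          * (∑ x ∈ N, ∑ y ∈ N, μ x y * |f x - f y| ^ p) ^ (2 / p) := by
  have hpt (x y : V) : μ x y * (|f x| ^ (p / 2) - |f y| ^ (p / 2)) ^ 2
      ≤ (p / 2) ^ 2 * (μ x y * (|f x| ^ (p - 2) * |f x - f y| ^ 2))
        + (p / 2) ^ 2 * (μ x y * (|f y| ^ (p - 2) * |f y - f x| ^ 2)) := by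
    have h := sq_rpow_sub_rpow_le (abs_nonneg (f x)) (abs_nonneg (f y)) (r := p / 2) (by linarith)
    rw [show 2 * (p / 2) - 2 = p - 2 by ring] at h
    have hd : (|f x| - |f y|) ^ 2 ≤ |f x - f y| ^ 2 :=
      sq_le_sq.2 ((abs_abs_sub_abs_le_abs_sub _ _).trans (le_abs_self _))
    have hfac : 0 ≤ (p / 2) ^ 2 * (|f x| ^ (p - 2) + |f y| ^ (p - 2)) := by positivity
    have := mul_le_mul_of_nonneg_left (h.trans (mul_le_mul_of_nonneg_left hd hfac)) (hnn x y)
    rw [abs_sub_comm (f y)]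
    linarith
  have hswap := sum_sum_mul_swap N hsymm fun x y => |f x| ^ (p - 2) * |f x - f y| ^ 2
  have hPQ : (1 - 2 / p)⁻¹.HolderConjugate (2 / p)⁻¹ :=
    .inv_inv (by rw [sub_pos, div_lt_one (by linarith)]; exact hp) (by positivity) (by ring)
  have hA (x : V) : (|f x| ^ (p - 2)) ^ (1 - 2 / p)⁻¹ = |f x| ^ p := by
    rw [← rpow_mul (abs_nonneg _)]; congr 1; field_simp [(by linarith : p - 2 ≠ 0)]
  have hB (x y : V) : (|f x - f y| ^ 2) ^ (2 / p)⁻¹ = |f x - f y| ^ p := by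
    rw [← rpow_natCast, ← rpow_mul (abs_nonneg _)]; congr 1; field_simp; norm_num
  have hHolder := inner_le_weight_mul_Lp_mul_Lq_of_nonneg (N ×ˢ N) hPQ
    (w := fun z => μ z.1 z.2) (a := fun z => |f z.1| ^ (p - 2)) (b := fun z => |f z.1 - f z.2| ^ 2)
    (fun z _ => hnn _ _) (fun z _ => by positivity) (fun z _ => by positivity)
  simp only [sum_product, one_div, inv_inv, hA, hB] at hHolder
  calc ∑ x ∈ N, ∑ y ∈ N, μ x y * (|f x| ^ (p / 2) - |f y| ^ (p / 2)) ^ 2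
      ≤ ∑ x ∈ N, ∑ y ∈ N, ((p / 2) ^ 2 * (μ x y * (|f x| ^ (p - 2) * |f x - f y| ^ 2))
        + (p / 2) ^ 2 * (μ x y * (|f y| ^ (p - 2) * |f y - f x| ^ 2))) :=
        sum_le_sum fun x _ => sum_le_sum fun y _ => hpt x y
    _ = p ^ 2 / 2 * ∑ x ∈ N, ∑ y ∈ N, μ x y * |f x| ^ (p - 2) * |f x - f y| ^ 2 := by
        simp only [sum_add_distrib, ← mul_sum, hswap, mul_assoc]; ring
    _ ≤ _ := by rw [mul_assoc _ (_ ^ (1 - 2 / p))]; gcongr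

lemma sum_abs_rpow_mul_le_of_two_lt (hν : ∀ x, 0 ≤ ν x) (hsymm : ∀ x y, μ x y = μ y x)
    (hnn : ∀ x y, 0 ≤ μ x y) {M : ℝ} (hM : 0 ≤ M) (hdeg : ∀ x, ∑ y ∈ N, μ x y ≤ M * ν x)
    {C p : ℝ} (hp : 2 < p) (f : V → ℝ)
    (hgap : ∑ x ∈ N, |f x| ^ p * ν x ≤ C ^ 2 *
      (1 / 2 * ∑ x ∈ N, ∑ y ∈ N, μ x y * (|f x| ^ (p / 2) - |f y| ^ (p / 2)) ^ 2)) :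
    ∑ x ∈ N, |f x| ^ p * ν x ≤ (C ^ 2 * p ^ 2 / 4 * M ^ (1 - 2 / p) * 2 ^ (2 / p)) ^ (2 / p)⁻¹
      * (1 / 2 * ∑ x ∈ N, ∑ y ∈ N, μ x y * |f x - f y| ^ p) := by
  set A := ∑ x ∈ N, |f x| ^ p * ν x
  set B := ∑ x ∈ N, ∑ y ∈ N, μ x y * |f x - f y| ^ p
  have hA : 0 ≤ A := sum_nonneg fun x _ => mul_nonneg (by positivity) (hν x)
  have hB : 0 ≤ B :=
    sum_nonneg fun x _ => sum_nonneg fun y _ => mul_nonneg (hnn x y) (by positivity)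
  have hθ : 0 ≤ 1 - 2 / p := by rw [sub_nonneg, div_le_one (by linarith)]; linarith
  have hB₂ : B ^ (2 / p) = 2 ^ (2 / p) * (1 / 2 * B) ^ (2 / p) := by
    rw [← mul_rpow zero_le_two (by positivity)]; ring_nf
  refine le_rpow_inv_mul_of_le_mul_rpow_mul_rpow hA (by positivity) (by positivity)
    (by positivity) ?_
  calc A ≤ C ^ 2 * (1 / 2 * ∑ x ∈ N, ∑ y ∈ N,
        μ x y * (|f x| ^ (p / 2) - |f y| ^ (p / 2)) ^ 2) := hgap
    _ ≤ C ^ 2 * (1 / 2 * (p ^ 2 / 2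
          * (∑ x ∈ N, ∑ y ∈ N, μ x y * |f x| ^ p) ^ (1 - 2 / p) * B ^ (2 / p))) := by
        gcongr; exact sum_sum_sq_rpow_sub_le_of_two_lt N hsymm hnn hp f
    _ ≤ C ^ 2 * (1 / 2 * (p ^ 2 / 2 * (M * A) ^ (1 - 2 / p) * B ^ (2 / p))) := by
        gcongr
        · exact sum_nonneg fun x _ => sum_nonneg fun y _ => mul_nonneg (hnn x y) (by positivity)
        · exact sum_sum_mul_le_of_sum_le N hdeg fun x => by positivity
    _ = _ := by rw [mul_rpow hM hA, hB₂]; ring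

end FiniteSums

section Graph

variable {V : Type*} {ν : V → ℝ} {μ : V → V → ℝ}

lemma exists_finset_nbhd_support_subset
    (hloc : ∀ x, (Function.support (μ x)).Finite) {f : V → ℝ} (hf : f.support.Finite) :
    ∃ N : Finset V, (∀ x, f x ≠ 0 → x ∈ N) ∧ ∀ x y, f x ≠ 0 → μ x y ≠ 0 → y ∈ N := by
  classical
  refine ⟨hf.toFinset ∪ hf.toFinset.biUnion fun x => (hloc x).toFinset,
    fun x hx => mem_union_left _ (hf.mem_toFinset.2 hx), fun x y hx hxy => ?_⟩
  exact mem_union_right _ (mem_biUnion.2 ⟨x, hf.mem_toFinset.2 hx, (hloc x).mem_toFinset.2 hxy⟩)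

lemma tsum_mul_eq_sum {f : V → ℝ} {N : Finset V} (hN : ∀ x, f x ≠ 0 → x ∈ N) (φ : ℝ → ℝ)
    (hφ : φ 0 = 0) : ∑' x, φ (f x) * ν x = ∑ x ∈ N, φ (f x) * ν x :=
  tsum_eq_sum fun x hx => by rw [not_ne_iff.1 (mt (hN x) hx), hφ, zero_mul]

lemma tsum_tsum_mul_eq_sum_sum (hsymm : ∀ x y, μ x y = μ y x) {f : V → ℝ} {N : Finset V}
    (hN : ∀ x, f x ≠ 0 → x ∈ N) (hadj : ∀ x y, f x ≠ 0 → μ x y ≠ 0 → y ∈ N)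
    (Φ : ℝ → ℝ → ℝ) (hΦ : Φ 0 0 = 0) :
    ∑' x, ∑' y, μ x y * Φ (f x) (f y) = ∑ x ∈ N, ∑ y ∈ N, μ x y * Φ (f x) (f y) := by
  have hmem (x y : V) (h : μ x y * Φ (f x) (f y) ≠ 0) : x ∈ N ∧ y ∈ N := by
    have hxy := left_ne_zero_of_mul h
    by_cases hx : f x = 0
    · have hy : f y ≠ 0 := fun hy => h (by rw [hx, hy, hΦ, mul_zero])
      exact ⟨hadj y x hy (by rwa [hsymm]), hN y hy⟩
    · exact ⟨hN x hx, hadj x y hx hxy⟩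
  rw [tsum_eq_sum (s := N) fun x hx => ?_]
  · exact sum_congr rfl fun x _ => tsum_eq_sum fun y hy => not_ne_iff.1 fun h => hy (hmem x y h).2
  · rw [tsum_congr fun y => not_ne_iff.1 fun h => hx (hmem x y h).1, tsum_zero]

lemma exists_pos_sum_le_mul (hν : ∀ x, 0 < ν x) (hnn : ∀ x y, 0 ≤ μ x y)
    (hloc : ∀ x, (Function.support (μ x)).Finite) (hM : ∃ M : ℝ, ∀ x, (∑' y, μ x y) / ν x ≤ M) :
    ∃ M > 0, ∀ (N : Finset V) x, ∑ y ∈ N, μ x y ≤ M * ν x := by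
  obtain ⟨M, hM⟩ := hM
  refine ⟨max M 1, by positivity, fun N x => ?_⟩
  calc ∑ y ∈ N, μ x y ≤ ∑' y, μ x y :=
        (summable_of_hasFiniteSupport (hloc x)).sum_le_tsum N fun y _ => hnn x y
    _ ≤ M * ν x := (div_le_iff₀ (hν x)).1 (hM x)
    _ ≤ max M 1 * ν x := by gcongr; exacts [(hν x).le, le_max_left M 1]

lemma exists_half_tsum_tsum_abs_sub_rpow_le (hν : ∀ x, 0 < ν x)
    (hsymm : ∀ x y, μ x y = μ y x) (hnn : ∀ x y, 0 ≤ μ x y)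
    (hloc : ∀ x, (Function.support (μ x)).Finite) (hM : ∃ M : ℝ, ∀ x, (∑' y, μ x y) / ν x ≤ M)
    {p : ℝ} (hp : 0 < p) :
    ∃ K > 0, ∀ f : V → ℝ, (Function.support f).Finite →
      (1 / 2) * ∑' x, ∑' y, μ x y * |f x - f y| ^ p ≤ K * ∑' x, |f x| ^ p * ν x := by
  obtain ⟨M, hM₀, hdeg⟩ := exists_pos_sum_le_mul hν hnn hloc hM
  refine ⟨2 ^ p * M, by positivity, fun f hf => ?_⟩
  obtain ⟨N, hN, hadj⟩ := exists_finset_nbhd_support_subset hloc hf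
  rw [tsum_tsum_mul_eq_sum_sum hsymm hN hadj (fun a b => |a - b| ^ p) (by simp [hp.ne']),
    tsum_mul_eq_sum hN (fun a => |a| ^ p) (by simp [hp.ne'])]
  exact half_sum_sum_abs_sub_rpow_le N hsymm hnn (hdeg N) hp.le f

lemma sum_abs_rpow_mul_le_of_spectral_gap (hν : ∀ x, 0 ≤ ν x)
    (hsymm : ∀ x y, μ x y = μ y x) (hnn : ∀ x y, 0 ≤ μ x y) {C : ℝ}
    (hgap : ∀ f : V → ℝ, (Function.support f).Finite →
      Real.sqrt (∑' x, f x ^ 2 * ν x)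
        ≤ C * Real.sqrt ((1 / 2) * ∑' x, ∑' y, μ x y * (f x - f y) ^ 2))
    {p : ℝ} (hp : 0 < p) {f : V → ℝ} {N : Finset V} (hN : ∀ x, f x ≠ 0 → x ∈ N)
    (hadj : ∀ x y, f x ≠ 0 → μ x y ≠ 0 → y ∈ N) :
    ∑ x ∈ N, |f x| ^ p * ν x
      ≤ C ^ 2 * (1 / 2 * ∑ x ∈ N, ∑ y ∈ N, μ x y * (|f x| ^ (p / 2) - |f y| ^ (p / 2)) ^ 2) := by
  have hsq (a : ℝ) : (|a| ^ (p / 2)) ^ 2 = |a| ^ p := by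
    rw [← rpow_natCast, ← rpow_mul (abs_nonneg _)]; norm_num
  have h := hgap (fun x => |f x| ^ (p / 2)) (N.finite_toSet.subset fun x hx =>
    hN x fun h0 => hx (by simp [h0, hp.ne']))
  simp only [hsq] at h
  rw [tsum_mul_eq_sum hN (fun a => |a| ^ p) (by simp [hp.ne']),
    tsum_tsum_mul_eq_sum_sum hsymm hN hadj (fun a b => (|a| ^ (p / 2) - |b| ^ (p / 2)) ^ 2)
      (by simp [hp.ne'])] at h
  have hA : 0 ≤ ∑ x ∈ N, |f x| ^ p * ν x :=
    sum_nonneg fun x _ => mul_nonneg (by positivity) (hν x)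
  have hE : 0 ≤ 1 / 2 * ∑ x ∈ N, ∑ y ∈ N, μ x y * (|f x| ^ (p / 2) - |f y| ^ (p / 2)) ^ 2 :=
    mul_nonneg (by norm_num) (sum_nonneg fun x _ => sum_nonneg fun y _ =>
      mul_nonneg (hnn x y) (sq_nonneg _))
  calc ∑ x ∈ N, |f x| ^ p * ν x = √(∑ x ∈ N, |f x| ^ p * ν x) ^ 2 := (sq_sqrt hA).symm
    _ ≤ _ := pow_le_pow_left₀ (sqrt_nonneg _) h 2
    _ = _ := by rw [mul_pow, sq_sqrt hE]

lemma exists_tsum_abs_rpow_mul_le_half_tsum_tsum (hν : ∀ x, 0 < ν x)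
    (hsymm : ∀ x y, μ x y = μ y x) (hnn : ∀ x y, 0 ≤ μ x y)
    (hloc : ∀ x, (Function.support (μ x)).Finite) (hM : ∃ M : ℝ, ∀ x, (∑' y, μ x y) / ν x ≤ M)
    (hgap : ∃ C₂ : ℝ, 0 < C₂ ∧ ∀ f : V → ℝ, (Function.support f).Finite →
      Real.sqrt (∑' x, f x ^ 2 * ν x)
        ≤ C₂ * Real.sqrt ((1 / 2) * ∑' x, ∑' y, μ x y * (f x - f y) ^ 2))
    {p : ℝ} (hp : 0 < p) :
    ∃ k > 0, ∀ f : V → ℝ, (Function.support f).Finite →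
      ∑' x, |f x| ^ p * ν x ≤ k * ((1 / 2) * ∑' x, ∑' y, μ x y * |f x - f y| ^ p) := by
  obtain ⟨C, hC, hgap⟩ := hgap
  obtain ⟨M, hM₀, hdeg⟩ := exists_pos_sum_le_mul hν hnn hloc hM
  obtain ⟨k, hk, hfin⟩ : ∃ k > 0, ∀ (N : Finset V) (f : V → ℝ), (∀ x, f x ≠ 0 → x ∈ N) →
      (∀ x y, f x ≠ 0 → μ x y ≠ 0 → y ∈ N) →
      ∑ x ∈ N, |f x| ^ p * ν x ≤ k * (1 / 2 * ∑ x ∈ N, ∑ y ∈ N, μ x y * |f x - f y| ^ p) := by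
    rcases le_or_gt p 2 with hp₂ | hp₂
    · refine ⟨C ^ 2, by positivity, fun N f hN hadj => ?_⟩
      refine (sum_abs_rpow_mul_le_of_spectral_gap (fun x => (hν x).le) hsymm hnn hgap hp hN
        hadj).trans ?_
      gcongr C ^ 2 * (1 / 2 * ?_)
      exact sum_sum_sq_rpow_sub_le_of_le_two N hnn hp.le hp₂ f
    · exact ⟨_, by positivity, fun N f hN hadj =>
        sum_abs_rpow_mul_le_of_two_lt N (fun x => (hν x).le) hsymm hnn hM₀.le (hdeg N) hp₂ f
          (sum_abs_rpow_mul_le_of_spectral_gap (fun x => (hν x).le) hsymm hnn hgap hp hN hadj)⟩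
  refine ⟨k, hk, fun f hf => ?_⟩
  obtain ⟨N, hN, hadj⟩ := exists_finset_nbhd_support_subset hloc hf
  rw [tsum_tsum_mul_eq_sum_sum hsymm hN hadj (fun a b => |a - b| ^ p) (by simp [hp.ne']),
    tsum_mul_eq_sum hN (fun a => |a| ^ p) (by simp [hp.ne'])]
  exact hfin N f hN hadj

end Graph

theorem edge_norm_equiv_vertex_norm_of_spectral_gap_general {V : Type*} (ν : V → ℝ) (μ : V → V → ℝ)
    (hν : ∀ x, 0 < ν x) (hsymm : ∀ x y, μ x y = μ y x) (hnn : ∀ x y, 0 ≤ μ x y)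
    (hloc : ∀ x, (Function.support (μ x)).Finite)
    (hM : ∃ M : ℝ, ∀ x, (∑' y, μ x y) / ν x ≤ M)
    (hgap : ∃ C₂ : ℝ, 0 < C₂ ∧ ∀ f : V → ℝ, (Function.support f).Finite →
      Real.sqrt (∑' x, f x ^ 2 * ν x)
        ≤ C₂ * Real.sqrt ((1 / 2) * ∑' x, ∑' y, μ x y * (f x - f y) ^ 2))
    (p : ℝ) (hp : 1 ≤ p) :
    ∃ c C : ℝ, 0 < c ∧ 0 < C ∧ ∀ f : V → ℝ, (Function.support f).Finite →
      c * (∑' x, |f x| ^ p * ν x) ^ (1 / p)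
          ≤ ((1 / 2) * ∑' x, ∑' y, μ x y * |f x - f y| ^ p) ^ (1 / p) ∧
        ((1 / 2) * ∑' x, ∑' y, μ x y * |f x - f y| ^ p) ^ (1 / p)
          ≤ C * (∑' x, |f x| ^ p * ν x) ^ (1 / p) := by
  have hp₀ : 0 < p := zero_lt_one.trans_le hp
  obtain ⟨k, hk, hlower⟩ :=
    exists_tsum_abs_rpow_mul_le_half_tsum_tsum hν hsymm hnn hloc hM hgap hp₀
  obtain ⟨K, hK, hupper⟩ := exists_half_tsum_tsum_abs_sub_rpow_le hν hsymm hnn hloc hM hp₀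
  refine ⟨(k ^ (1 / p))⁻¹, K ^ (1 / p), by positivity, by positivity, fun f hf => ⟨?_, ?_⟩⟩
  · rw [inv_mul_le_iff₀ (by positivity)]
    exact rpow_le_mul_rpow_of_le_mul (tsum_nonneg fun x => mul_nonneg (by positivity) (hν x).le)
      hk (by positivity) (hlower f hf)
  · exact rpow_le_mul_rpow_of_le_mul (mul_nonneg (by norm_num) (tsum_nonneg fun x =>
      tsum_nonneg fun y => mul_nonneg (hnn x y) (by positivity))) hK (by positivity) (hupper f hf)

theorem edge_norm_equiv_vertex_norm_of_spectral_gap {V : Type*} (ν : V → ℝ) (μ : V → V → ℝ)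
    (hν : ∀ x, 0 < ν x) (hsymm : ∀ x y, μ x y = μ y x) (hnn : ∀ x y, 0 ≤ μ x y)
    (hloc : ∀ x, (Function.support (μ x)).Finite)
    (hconn : ∀ x y : V, Relation.ReflTransGen (fun a b => 0 < μ a b) x y)
    (hM : ∃ M : ℝ, ∀ x, (∑' y, μ x y) / ν x ≤ M)
    (hgap : ∃ C₂ : ℝ, 0 < C₂ ∧ ∀ f : V → ℝ, (Function.support f).Finite →
      Real.sqrt (∑' x, f x ^ 2 * ν x)
        ≤ C₂ * Real.sqrt ((1 / 2) * ∑' x, ∑' y, μ x y * (f x - f y) ^ 2))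
    (p : ℝ) (hp : 1 ≤ p) :
    ∃ c C : ℝ, 0 < c ∧ 0 < C ∧ ∀ f : V → ℝ, (Function.support f).Finite →
      c * (∑' x, |f x| ^ p * ν x) ^ (1 / p)
          ≤ ((1 / 2) * ∑' x, ∑' y, μ x y * |f x - f y| ^ p) ^ (1 / p) ∧
        ((1 / 2) * ∑' x, ∑' y, μ x y * |f x - f y| ^ p) ^ (1 / p)
          ≤ C * (∑' x, |f x| ^ p * ν x) ^ (1 / p) :=
  edge_norm_equiv_vertex_norm_of_spectral_gap_general ν μ hν hsymm hnn hloc hM hgap p hp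
end

section
/- Every ℓ²(V,ν) harmonic function on a connected locally finite weighted graph with bounded Laplacian is constant: if f ∈ ℓ²(V,ν) and Δf = 0, then f is constant. -/
theorem l2_liouville {V : Type*} (ν : V → ℝ) (μ : V → V → ℝ)
    (hν : ∀ x, 0 < ν x) (hsymm : ∀ x y, μ x y = μ y x) (hnn : ∀ x y, 0 ≤ μ x y)
    (hloc : ∀ x, (Function.support (μ x)).Finite)
    (hconn : ∀ x y : V, Relation.ReflTransGen (fun a b => 0 < μ a b) x y)
    (hM : ∃ M : ℝ, ∀ x, (∑' y, μ x y) / ν x ≤ M)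
    (f : V → ℝ) (hf : Summable fun x => f x ^ 2 * ν x)
    (hharm : ∀ x, (∑' y, μ x y * (f x - f y)) / ν x = 0) :
    ∀ x y : V, f x = f y := by
  obtain ⟨M, hMle⟩ := hM
  -- per-row summability
  have hrow : ∀ (x : V) (c : V → ℝ), Summable (fun y => μ x y * c y) := by
    intro x c
    apply summable_of_ne_finset_zero (s := (hloc x).toFinset)
    intro y hy
    have : μ x y = 0 := by
      by_contra h
      exact hy ((hloc x).mem_toFinset.mpr h)
    simp [this]
  have hμsum : ∀ x, Summable (fun y => μ x y) := by
    intro x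
    simpa using hrow x (fun _ => 1)
  have hμν : ∀ x, (∑' y, μ x y) ≤ M * ν x := by
    intro x
    have := hMle x
    rw [div_le_iff₀ (hν x)] at this
    linarith [this]
  -- numerator of harmonicity vanishes
  have hnum : ∀ x, (∑' y, μ x y * (f x - f y)) = 0 := by
    intro x
    rcases div_eq_zero_iff.mp (hharm x) with h | h
    · exact h
    · exact absurd h (ne_of_gt (hν x))
  set F : V × V → ℝ := fun p => μ p.1 p.2 * f p.1 ^ 2 with hFdef
  set G : V × V → ℝ := fun p => μ p.1 p.2 * f p.2 ^ 2 with hGdef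
  set D : V × V → ℝ := fun p => μ p.1 p.2 * (f p.1 - f p.2) ^ 2 with hDdef
  have hFnn : ∀ p, 0 ≤ F p := fun p => mul_nonneg (hnn _ _) (sq_nonneg _)
  have hGnn : ∀ p, 0 ≤ G p := fun p => mul_nonneg (hnn _ _) (sq_nonneg _)
  have hDnn : ∀ p, 0 ≤ D p := fun p => mul_nonneg (hnn _ _) (sq_nonneg _)
  -- Summable F
  have hFsum : Summable F := by
    rw [summable_prod_of_nonneg (fun p => hFnn p)]
    constructor
    · intro x
      exact hrow x (fun _ => f x ^ 2)
    · refine Summable.of_nonneg_of_le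
        (fun x => tsum_nonneg (fun y => hFnn (x, y))) ?_ (hf.mul_left M)
      · intro x
        have : (∑' y, F (x, y)) = (∑' y, μ x y) * f x ^ 2 := by
          simpa [hFdef] using tsum_mul_right (f := fun y => μ x y) (a := f x ^ 2)
        rw [this]
        have h1 : (∑' y, μ x y) * f x ^ 2 ≤ (M * ν x) * f x ^ 2 :=
          mul_le_mul_of_nonneg_right (hμν x) (sq_nonneg _)
        nlinarith [h1]
  -- Summable G via swap
  have hGswap : ∀ p : V × V, G p = F p.swap := by
    intro ⟨x, y⟩
    simp [hFdef, hGdef, hsymm x y]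
  have hGsum : Summable G := by
    have : Summable (F ∘ Prod.swap) :=
      ((Equiv.prodComm V V).summable_iff ).mpr hFsum
    exact this.congr (fun p => (hGswap p).symm)
  -- Summable D
  have hDsum : Summable D := by
    refine Summable.of_nonneg_of_le hDnn ?_ ((hFsum.mul_left 2).add (hGsum.mul_left 2))
    · intro ⟨x, y⟩
      have : (f x - f y) ^ 2 ≤ 2 * f x ^ 2 + 2 * f y ^ 2 := by nlinarith [sq_nonneg (f x + f y)]
      have := mul_le_mul_of_nonneg_left this (hnn x y)
      simp only [hDdef, hFdef, hGdef]
      nlinarith [this]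
  -- g summable
  set g : V × V → ℝ := fun p => f p.1 * (μ p.1 p.2 * (f p.1 - f p.2)) with hgdef
  have hgabs : ∀ p, |g p| ≤ (F p + D p) / 2 := by
    intro ⟨x, y⟩
    have hμ := hnn x y
    rw [abs_le]
    constructor <;> · simp only [hgdef, hFdef, hDdef]; nlinarith [mul_nonneg hμ (sq_nonneg (f x + (f x - f y))), mul_nonneg hμ (sq_nonneg (f x - (f x - f y)))]
  have hgsum : Summable g := by
    apply Summable.of_abs
    exact Summable.of_nonneg_of_le (fun p => abs_nonneg _) hgabs ((hFsum.add hDsum).div_const 2)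
  -- tsum g = 0
  have hgtsum : ∑' p, g p = 0 := by
    have hrowg : ∀ x, Summable fun y => g (x, y) := fun x =>
      (hrow x fun y => f x * (f x - f y)).congr (fun y => by simp only [hgdef]; ring)
    rw [Summable.tsum_prod' hgsum hrowg]
    have : ∀ x, (∑' y, g (x, y)) = 0 := by
      intro x
      have : (∑' y, g (x, y)) = f x * ∑' y, μ x y * (f x - f y) := by
        simpa [hgdef] using (tsum_mul_left (a := f x) (f := fun y => μ x y * (f x - f y)))
      rw [this, hnum x, mul_zero]
    simp [this]
  -- h
  set h : V × V → ℝ := fun p => f p.2 * (μ p.1 p.2 * (f p.1 - f p.2)) with hhdef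
  have hhswap : ∀ p : V × V, h p = -(g p.swap) := by
    intro ⟨x, y⟩
    simp only [hgdef, hhdef, Prod.swap]
    rw [hsymm y x]
    ring
  have hgswapsum : Summable (fun p : V × V => g p.swap) :=
    ((Equiv.prodComm V V).summable_iff).mpr hgsum
  have hhsum : Summable h := by
    exact (hgswapsum.neg).congr (fun p => (hhswap p).symm)
  have hhtsum : ∑' p, h p = 0 := by
    have h1 : ∑' p : V × V, g p.swap = ∑' p, g p := by
      exact (Equiv.prodComm V V).tsum_eq g
    calc ∑' p, h p = ∑' p : V × V, -(g p.swap) := tsum_congr hhswap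
      _ = -∑' p : V × V, g p.swap := tsum_neg
      _ = 0 := by rw [h1, hgtsum, neg_zero]
  -- D = g - h
  have hDgh : ∀ p, D p = g p - h p := by
    intro ⟨x, y⟩
    simp only [hDdef, hgdef, hhdef]
    ring
  have hDtsum : ∑' p, D p = 0 := by
    calc ∑' p, D p = ∑' p, (g p - h p) := tsum_congr hDgh
      _ = (∑' p, g p) - ∑' p, h p := Summable.tsum_sub hgsum hhsum
      _ = 0 := by rw [hgtsum, hhtsum, sub_zero]
  -- each D p = 0
  have hDzero : ∀ p, D p = 0 := by
    intro p
    have hle : D p ≤ 0 := hDtsum ▸ Summable.le_tsum hDsum p (fun j _ => hDnn j)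
    exact le_antisymm hle (hDnn p)
  -- adjacent equality
  have hadj : ∀ x y, 0 < μ x y → f x = f y := by
    intro x y hxy
    have := hDzero (x, y)
    simp only [hDdef] at this
    have : (f x - f y) ^ 2 = 0 := by
      rcases mul_eq_zero.mp this with h | h
      · exact absurd h (ne_of_gt hxy)
      · exact h
    have := pow_eq_zero_iff (n := 2) (by norm_num) |>.mp this
    linarith
  intro x y
  induction hconn x y with
  | refl => rfl
  | tail _ hbc ih => exact ih.trans (hadj _ _ hbc)
end
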